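/- arXiv:2307.05536 — 14 statements merged into one kernel-verified Lean document; each statement's English description precedes it below -/
import Mathlib

section
/- If T : H → H is a topological isomorphism (bounded linear bijection with bounded inverse) on a complex Hilbert space H with ‖T‖ ≤ 1, then there exist unitary operators U and V on H such that T = (1/2)(U + V). -/
open scoped ENNReal NNReal

noncomputable def l1Norm {H : Type*} [NormedAddCommGroup H] [InnerProductSpace ℂ H]
    (e : ℕ → H) (x : H) : ℝ≥0∞ :=
  ∑' n, (‖(inner ℂ x (e n) : ℂ)‖₊ : ℝ≥0∞)

/-- A Riesz basis: image of an orthonormal basis under a topological isomorphism. -/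
def IsRieszBasis {H : Type*} [NormedAddCommGroup H] [InnerProductSpace ℂ H]
    (e : ℕ → H) : Prop :=
  ∃ (b : HilbertBasis ℕ ℂ H) (T : H ≃L[ℂ] H), ∀ n, e n = T (b n)

/-- A frame for `H`. -/
def IsFrame {H : Type*} [NormedAddCommGroup H] [InnerProductSpace ℂ H]
    (x : ℕ → H) : Prop :=
  ∃ A B : ℝ≥0, 0 < A ∧ A ≤ B ∧ ∀ y : H,
    (A : ℝ≥0∞) * (‖y‖₊ : ℝ≥0∞) ^ 2 ≤ (∑' n, (‖(inner ℂ y (x n) : ℂ)‖₊ : ℝ≥0∞) ^ 2) ∧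
    (∑' n, (‖(inner ℂ y (x n) : ℂ)‖₊ : ℝ≥0∞) ^ 2) ≤ (B : ℝ≥0∞) * (‖y‖₊ : ℝ≥0∞) ^ 2

/-- `M` is ℓ¹-bounded: finite sup of ℓ¹ norms with respect to some Riesz basis. -/
def L1Bounded {H : Type*} [NormedAddCommGroup H] [InnerProductSpace ℂ H]
    (M : Set H) : Prop :=
  ∃ e : ℕ → H, IsRieszBasis e ∧ ∃ R : ℝ≥0∞, R ≠ ⊤ ∧ ∀ x ∈ M, l1Norm e x ≤ R

/-- The space `H_E` of vectors with absolutely summable coefficients. -/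
def HE {H : Type*} [NormedAddCommGroup H] [InnerProductSpace ℂ H]
    (e : ℕ → H) : Set H :=
  {x : H | l1Norm e x ≠ ⊤}

theorem stmt0 {H : Type*} [NormedAddCommGroup H] [InnerProductSpace ℂ H] [CompleteSpace H]
    (T : H ≃L[ℂ] H) (hT : ‖(T : H →L[ℂ] H)‖ ≤ 1) :
    ∃ U V : H →L[ℂ] H, U ∈ unitary (H →L[ℂ] H) ∧ V ∈ unitary (H →L[ℂ] H) ∧
      (T : H →L[ℂ] H) = (1 / 2 : ℂ) • (U + V) := by
  obtain hH | hH := subsingleton_or_nontrivial H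
  · exact ⟨1, 1, by simp [Unitary.mem_iff, Subsingleton.elim (star (1:H →L[ℂ] H) * 1) 1,
      Subsingleton.elim ((1:H →L[ℂ] H) * star 1) 1],
      by simp [Unitary.mem_iff, Subsingleton.elim (star (1:H →L[ℂ] H) * 1) 1,
      Subsingleton.elim ((1:H →L[ℂ] H) * star 1) 1],
      Subsingleton.elim _ _⟩
  set A := H →L[ℂ] H
  set a : A := (T : A) with ha_def
  have ha : IsUnit a := ContinuousLinearMap.isUnit_iff_bijective.mpr T.bijective
  set c : A := star a * a with hc_def
  have hc_nonneg : 0 ≤ c := star_mul_self_nonneg a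
  set b : A := CFC.sqrt c with hb_def
  have hb_nonneg : 0 ≤ b := CFC.sqrt_nonneg c
  have hb_sa : IsSelfAdjoint b := IsSelfAdjoint.of_nonneg hb_nonneg
  have hbb : b * b = c := CFC.sqrt_mul_sqrt_self c hc_nonneg
  have hc_unit : IsUnit c := (ha.star).mul ha
  obtain ⟨γ, hγ⟩ := hc_unit
  have hcomm : Commute b ↑γ⁻¹ := by
    have h1 : Commute b ↑γ := by
      rw [hγ, ← hbb]; exact (Commute.refl b).mul_right (Commute.refl b)
    exact h1.units_inv_right
  have hb_unit : IsUnit b := by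
    refine ⟨⟨b, b * ↑γ⁻¹, ?_, ?_⟩, rfl⟩
    · rw [← mul_assoc, hbb, ← hγ, γ.mul_inv]
    · rw [hcomm.eq, mul_assoc, hbb, ← hγ, γ.inv_mul]
  obtain ⟨β, hβ⟩ := hb_unit
  -- norm bound
  have hnb : ‖b‖ ≤ 1 := by
    have h1 : ‖c‖ = ‖b‖ * ‖b‖ := by
      rw [← hbb]
      conv_lhs => rw [show b * b = star b * b from by rw [hb_sa.star_eq]]
      exact CStarRing.norm_star_mul_self
    have h2 : ‖c‖ ≤ 1 := by
      rw [hc_def, CStarRing.norm_star_mul_self]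
      calc ‖a‖ * ‖a‖ ≤ 1 * 1 := mul_le_mul hT hT (norm_nonneg a) zero_le_one
        _ = 1 := one_mul 1
    nlinarith [norm_nonneg b]
  -- β⁻¹ is selfadjoint
  have hβinv_mul : b * (↑β⁻¹ : A) = 1 := by rw [← hβ]; exact β.mul_inv
  have hmul_βinv : (↑β⁻¹ : A) * b = 1 := by rw [← hβ]; exact β.inv_mul
  have hβinv_sa : star (↑β⁻¹ : A) = ↑β⁻¹ := by
    have h1 : star (↑β⁻¹ : A) * b = 1 := by
      rw [← hb_sa.star_eq, ← star_mul, hβinv_mul, star_one]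
    calc star (↑β⁻¹ : A) = star (↑β⁻¹ : A) * (b * ↑β⁻¹) := by rw [hβinv_mul, mul_one]
      _ = (star (↑β⁻¹ : A) * b) * ↑β⁻¹ := by rw [mul_assoc]
      _ = ↑β⁻¹ := by rw [h1, one_mul]
  -- w := a * β⁻¹ is unitary
  set w : A := a * ↑β⁻¹ with hw_def
  have hw_unit : IsUnit w := ha.mul β⁻¹.isUnit
  have hws : star w * w = 1 := by
    have e1 : star w * w = ↑β⁻¹ * (star a * a) * ↑β⁻¹ := by
      rw [hw_def, star_mul, hβinv_sa]; noncomm_ring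
    rw [e1, ← hc_def, ← hbb]
    simp [mul_assoc, hβinv_mul, hmul_βinv]
  have hw_mem : w ∈ unitary A := by
    refine Unitary.mem_iff.mpr ⟨hws, ?_⟩
    obtain ⟨ω, hω⟩ := hw_unit
    have hsw : star w = ↑ω⁻¹ := by
      have h2 : star w * ↑ω = 1 := by rw [hω, hws]
      calc star w = star w * ↑ω * ↑ω⁻¹ := by rw [mul_assoc, ω.mul_inv, mul_one]
        _ = ↑ω⁻¹ := by rw [h2, one_mul]
    rw [hsw, ← hω, ω.mul_inv]
  -- spectrum of b
  have hspec_re : ∀ x ∈ spectrum ℂ b, (x.re : ℂ) = x := fun x hx =>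
    hb_sa.spectrumRestricts.rightInvOn hx
  have hspec_norm : ∀ x ∈ spectrum ℂ b, x.re ^ 2 ≤ 1 := by
    intro x hx
    have h1 : ‖x‖ ≤ ‖b‖ := spectrum.norm_le_norm_of_mem hx
    have h2 : |x.re| ≤ ‖x‖ := Complex.abs_re_le_norm x
    nlinarith [abs_nonneg x.re, sq_abs x.re]
  -- the unitary s
  set f : ℂ → ℂ := fun z => (z.re : ℂ) + Complex.I * Real.sqrt (1 - z.re ^ 2) with hf_def
  have hf_cont : Continuous f := by fun_prop
  have hfstar : ∀ z, star (f z) = (z.re : ℂ) - Complex.I * Real.sqrt (1 - z.re ^ 2) := by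
    intro z
    simp [hf_def, Complex.conj_ofReal, sub_eq_add_neg]
  set s : A := cfc f b with hs_def
  have hbsn : IsStarNormal b := hb_sa.isStarNormal
  have hs_mem : s ∈ unitary A := by
    rw [hs_def, cfc_unitary_iff f b hbsn hf_cont.continuousOn]
    intro x hx
    set t : ℝ := Real.sqrt (1 - x.re ^ 2) with ht_def
    have ht : t ^ 2 = 1 - x.re ^ 2 := Real.sq_sqrt (by linarith [hspec_norm x hx])
    have htc : (t : ℂ) ^ 2 = 1 - (x.re : ℂ) ^ 2 := by
      rw [← Complex.ofReal_pow, ht]; push_cast; ring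
    rw [hfstar x, hf_def]
    linear_combination htc - (t : ℂ) ^ 2 * Complex.I_sq
  -- s + star s = b + b
  have hs_sum : s + star s = b + b := by
    rw [hs_def, ← cfc_star f b]
    rw [← cfc_add b f (fun z => star (f z)) hf_cont.continuousOn
      (by simpa [hfstar] using (by fun_prop : Continuous
        (fun z : ℂ => (z.re : ℂ) - Complex.I * Real.sqrt (1 - z.re ^ 2))).continuousOn)]
    have heq : Set.EqOn (fun z => f z + star (f z)) (fun z : ℂ => z + z) (spectrum ℂ b) := by
      intro x hx
      simp only [hfstar]; simp only [hf_def]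
      linear_combination (2 : ℂ) * hspec_re x hx
    rw [cfc_congr heq]
    have h3 : cfc (fun z : ℂ => z + z) b = cfc id b + cfc id b :=
      cfc_add b id id continuousOn_id continuousOn_id
    rw [h3, cfc_id ℂ b]
  -- conclude
  refine ⟨w * s, w * star s, mul_mem hw_mem hs_mem,
    mul_mem hw_mem (Unitary.star_mem hs_mem), ?_⟩
  have hwb : w * b = a := by
    rw [hw_def, mul_assoc, hmul_βinv, mul_one]
  have : w * s + w * star s = a + a := by
    rw [← mul_add, hs_sum, mul_add, hwb]
  rw [this]
  rw [← two_smul ℂ a, smul_smul]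
  norm_num
end

section
/- For every bounded linear operator T : H → H on a complex Hilbert space, there exist a scalar a ≥ 0, a unitary operator U, and a topological isomorphism S such that T = a(U + S). -/
open scoped ENNReal NNReal

theorem stmt1 {H : Type*} [NormedAddCommGroup H] [InnerProductSpace ℂ H] [CompleteSpace H] (T : H →L[ℂ] H) :
    ∃ a : ℝ, 0 ≤ a ∧ ∃ (U : H →L[ℂ] H) (S : H ≃L[ℂ] H),
      U ∈ unitary (H →L[ℂ] H) ∧ T = (a : ℂ) • (U + (S : H →L[ℂ] H)) := by
  set a : ℝ := ‖T‖ + 1 with ha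
  have hapos : (0:ℝ) < a := by positivity
  have hlt : ‖((a : ℂ))⁻¹ • T‖ < 1 := by
    rw [norm_smul, norm_inv, Complex.norm_real, Real.norm_eq_abs, abs_of_pos hapos,
      inv_mul_lt_iff₀ hapos]
    simp [ha]
  let u : (H →L[ℂ] H)ˣ := Units.oneSub ((a : ℂ)⁻¹ • T) hlt
  let S : H ≃L[ℂ] H := ContinuousLinearEquiv.ofUnit (-u)
  refine ⟨a, hapos.le, 1, S, one_mem _, ?_⟩
  have hS : (S : H →L[ℂ] H) = -(1 - (a : ℂ)⁻¹ • T) := by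
    show ((-u : (H →L[ℂ] H)ˣ) : H →L[ℂ] H) = _
    rw [Units.val_neg]
    rfl
  rw [hS, neg_sub, add_sub_cancel, smul_smul,
    mul_inv_cancel₀ (by exact_mod_cast hapos.ne'), one_smul]
end

section
/- Let {e_n} be an orthonormal basis for H and for each n let (a_{jn})_{j∈ℕ} be scalars with Σ_j |a_{jn}|² = 1 and Σ_j |a_{jn}| = ∞. Then the family {a_{jn} e_n}_{j,n∈ℕ} is a Parseval frame for H, and the only x ∈ H with Σ_{j,n} |⟨x, a_{jn} e_n⟩| < ∞ is x = 0. -/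
open scoped ENNReal NNReal

lemma parseval' {H : Type*} [NormedAddCommGroup H] [InnerProductSpace ℂ H] [CompleteSpace H]
    (b : HilbertBasis ℕ ℂ H) (x : H) :
    ∑' n, (‖(inner ℂ x (b n) : ℂ)‖₊ : ℝ≥0∞) ^ 2 = (‖x‖₊ : ℝ≥0∞) ^ 2 := by
  have h := b.hasSum_inner_mul_inner x x
  have e1 : ∀ i : ℕ, (inner ℂ x (b i) : ℂ) * inner ℂ (b i) x = ((‖(inner ℂ x (b i) : ℂ)‖ : ℂ)) ^ 2 :=
    fun i => by rw [← inner_conj_symm x (b i), RCLike.conj_mul, RCLike.norm_conj]; norm_cast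
  have e2 : (inner ℂ x x : ℂ) = (‖x‖ : ℂ) ^ 2 := inner_self_eq_norm_sq_to_K x
  rw [funext e1, e2] at h
  have h2 : HasSum (fun i => ‖(inner ℂ x (b i) : ℂ)‖ ^ 2) (‖x‖ ^ 2) := by
    have := h.mapL Complex.reCLM
    simpa [← Complex.ofReal_pow] using this
  have key : ∀ z : ℂ, ((‖z‖₊ : ℝ≥0∞)) ^ 2 = ENNReal.ofReal (‖z‖ ^ 2) := by
    intro z
    rw [ENNReal.ofReal_pow (norm_nonneg z), ofReal_norm, enorm_eq_nnnorm]
  calc ∑' n, (‖(inner ℂ x (b n) : ℂ)‖₊ : ℝ≥0∞) ^ 2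
      = ∑' n, ENNReal.ofReal (‖(inner ℂ x (b n) : ℂ)‖ ^ 2) := by simp_rw [key]
    _ = ENNReal.ofReal (∑' n, ‖(inner ℂ x (b n) : ℂ)‖ ^ 2) :=
        (ENNReal.ofReal_tsum_of_nonneg (fun n => by positivity) h2.summable).symm
    _ = (‖x‖₊ : ℝ≥0∞) ^ 2 := by
        rw [h2.tsum_eq, ENNReal.ofReal_pow (norm_nonneg x), ofReal_norm, enorm_eq_nnnorm]

theorem stmt3 {H : Type*} [NormedAddCommGroup H] [InnerProductSpace ℂ H] [CompleteSpace H] (b : HilbertBasis ℕ ℂ H) (a : ℕ → ℕ → ℂ)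
    (ha2 : ∀ n, (∑' j, (‖a j n‖₊ : ℝ≥0∞) ^ 2) = 1)
    (ha1 : ∀ n, (∑' j, (‖a j n‖₊ : ℝ≥0∞)) = ⊤) :
    (∀ x : H, (∑' p : ℕ × ℕ, (‖(inner ℂ x (a p.1 p.2 • b p.2) : ℂ)‖₊ : ℝ≥0∞) ^ 2)
        = (‖x‖₊ : ℝ≥0∞) ^ 2) ∧
    (∀ x : H, (∑' p : ℕ × ℕ, (‖(inner ℂ x (a p.1 p.2 • b p.2) : ℂ)‖₊ : ℝ≥0∞)) ≠ ⊤ → x = 0) := by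
  have key : ∀ (x : H) (j n : ℕ), (‖(inner ℂ x (a j n • b n) : ℂ)‖₊ : ℝ≥0∞)
      = (‖a j n‖₊ : ℝ≥0∞) * (‖(inner ℂ x (b n) : ℂ)‖₊ : ℝ≥0∞) := by
    intro x j n
    rw [inner_smul_right, nnnorm_mul, ENNReal.coe_mul]
  constructor
  · intro x
    calc ∑' p : ℕ × ℕ, (‖(inner ℂ x (a p.1 p.2 • b p.2) : ℂ)‖₊ : ℝ≥0∞) ^ 2
        = ∑' n, ∑' j, (‖a j n‖₊ : ℝ≥0∞) ^ 2 * (‖(inner ℂ x (b n) : ℂ)‖₊ : ℝ≥0∞) ^ 2 := by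
          rw [ENNReal.tsum_prod', ENNReal.tsum_comm]
          simp_rw [key, mul_pow]
      _ = ∑' n, (∑' j, (‖a j n‖₊ : ℝ≥0∞) ^ 2) * (‖(inner ℂ x (b n) : ℂ)‖₊ : ℝ≥0∞) ^ 2 := by
          simp_rw [ENNReal.tsum_mul_right]
      _ = ∑' n, (‖(inner ℂ x (b n) : ℂ)‖₊ : ℝ≥0∞) ^ 2 := by simp_rw [ha2, one_mul]
      _ = (‖x‖₊ : ℝ≥0∞) ^ 2 := parseval' b x
  · intro x hx
    have hsum : (∑' p : ℕ × ℕ, (‖(inner ℂ x (a p.1 p.2 • b p.2) : ℂ)‖₊ : ℝ≥0∞))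
        = ∑' n, (∑' j, (‖a j n‖₊ : ℝ≥0∞)) * (‖(inner ℂ x (b n) : ℂ)‖₊ : ℝ≥0∞) := by
      rw [ENNReal.tsum_prod', ENNReal.tsum_comm]
      simp_rw [key, ENNReal.tsum_mul_right]
    have hz : ∀ n, (inner ℂ x (b n) : ℂ) = 0 := by
      intro n
      by_contra hne
      apply hx
      rw [hsum, eq_top_iff]
      refine le_trans (le_of_eq ?_) (ENNReal.le_tsum n)
      rw [ha1 n, ENNReal.top_mul]
      simpa using hne
    have h0 : (inner ℂ x x : ℂ) = 0 := by
      rw [← b.tsum_inner_mul_inner x x]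
      convert tsum_zero with i
      rw [hz i, zero_mul]
    exact inner_self_eq_zero.mp h0
end

section
/- For every nonzero x in a separable infinite-dimensional Hilbert space H, there exists a Riesz basis E = {e_n} for H such that Σ_n |⟨x, e_n⟩| = ∞. -/
open scoped ENNReal NNReal ComplexConjugate

theorem stmt5 {H : Type*} [NormedAddCommGroup H] [InnerProductSpace ℂ H] [CompleteSpace H] (b₀ : HilbertBasis ℕ ℂ H) (x : H) (hx : x ≠ 0) :
    ∃ e : ℕ → H, IsRieszBasis e ∧ l1Norm e x = ⊤ := by
  classical
  set c : ℕ → ℂ := fun n => inner ℂ x (b₀ n) with hcdef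
  have hc : ∀ n, c n = inner ℂ x (b₀ n) := fun n => rfl
  have hck : ∃ k, c k ≠ 0 := by
    by_contra h
    push_neg at h
    apply hx
    have : b₀.repr x = 0 := by
      ext n
      have h0 : (inner ℂ x (b₀ n) : ℂ) = 0 := h n
      rw [b₀.repr_apply_apply, ← inner_conj_symm, h0, map_zero]
      simp
    simpa using congrArg b₀.repr.symm this
  obtain ⟨k, hk⟩ := hck
  set d : ℕ → ℝ := fun n => 1 / (n + 1) with hddef
  have hd : ∀ n, d n = 1 / (n + 1) := fun n => rfl
  set a : ℕ → ℂ := fun n => ((d n : ℂ) - c n) / c k with hadef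
  have ha : ∀ n, a n = ((d n : ℂ) - c n) / c k := fun n => rfl
  -- `c` is square-summable
  have hc2 : Memℓp c 2 := by
    have := lp.memℓp (b₀.repr x)
    rw [memℓp_gen_iff (by norm_num)] at this ⊢
    refine this.congr fun n => ?_
    rw [b₀.repr_apply_apply, ← norm_inner_symm]
  have hdsum : Summable (fun n : ℕ => (d n) ^ 2) := by
    have := (summable_nat_add_iff (f := fun n : ℕ => 1 / (n : ℝ) ^ 2) 1).2
      (Real.summable_one_div_nat_pow.2 one_lt_two)
    refine this.congr fun n => ?_
    rw [hd]; push_cast; rw [div_pow, one_pow]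
  have hd2 : Memℓp (fun n => (d n : ℂ)) 2 := by
    rw [memℓp_gen_iff (by norm_num)]
    refine hdsum.congr fun n => ?_
    simp only [ENNReal.toReal_ofNat, Complex.norm_real, Real.norm_eq_abs, Real.rpow_two, sq_abs]
  have ha2 : Memℓp (fun n => conj (a n)) 2 := by
    have h1 : Memℓp (fun n => (d n : ℂ) - c n) 2 := by
      have heq : (fun n => (d n : ℂ) - c n) = (fun n => (d n : ℂ)) + (-c) :=
        funext fun n => sub_eq_add_neg _ _
      rw [heq]; exact hd2.add hc2.neg
    have h2 : Memℓp ((c k)⁻¹ • (fun n => (d n : ℂ) - c n)) 2 := h1.const_smul _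
    rw [memℓp_gen_iff (by norm_num)] at h2 ⊢
    refine h2.congr fun n => ?_
    rw [ha, RCLike.norm_conj]
    simp only [Pi.smul_apply, smul_eq_mul, div_eq_inv_mul, norm_mul]
  -- the vector `v` with coefficients `conj (a n)`
  set v : H := b₀.repr.symm ⟨fun n => conj (a n), ha2⟩ with hv
  have hvb : ∀ n, (inner ℂ v (b₀ n) : ℂ) = a n := by
    intro n
    rw [← inner_conj_symm, ← b₀.repr_apply_apply, hv, LinearIsometryEquiv.apply_symm_apply]
    exact Complex.conj_conj _
  -- the rank-one perturbation `P`
  set P : H →L[ℂ] H := (innerSL ℂ v).smulRight (b₀ k) with hP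
  have hPy : ∀ y, P y = (inner ℂ v y : ℂ) • b₀ k := fun y => rfl
  have hPb : ∀ n, P (b₀ n) = a n • b₀ k := fun n => by rw [hPy, hvb]
  have hdk : (d k : ℂ) ≠ 0 := by
    rw [hd]
    exact_mod_cast Complex.ofReal_ne_zero.2 (by positivity)
  have hak : 1 + a k ≠ 0 := by
    have : 1 + a k = (d k : ℂ) / c k := by rw [ha]; field_simp; ring
    rw [this]; exact div_ne_zero hdk hk
  set κ : ℂ := (1 + a k)⁻¹ with hκdef
  have hκ : κ * (1 + a k) = 1 := inv_mul_cancel₀ hak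
  have hκ' : κ + κ * a k = 1 := by rw [← hκ]; ring
  have hPP : ∀ y, P (P y) = a k • P y := by
    intro y
    rw [hPy y, hPy, inner_smul_right, hvb, mul_comm, mul_smul, ← hPy y]
  have h1 : ∀ y : H, ((1:H →L[ℂ] H) - κ • P) (((1:H →L[ℂ] H) + P) y) = y := by
    intro y
    simp only [ContinuousLinearMap.add_apply, ContinuousLinearMap.sub_apply,
      ContinuousLinearMap.one_apply, ContinuousLinearMap.smul_apply, map_add, hPP]
    have e1 : κ • P y + κ • (a k • P y) = P y := by
      rw [smul_smul, ← add_smul, hκ', one_smul]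
    calc y - κ • P y + (P y - κ • a k • P y)
        = y + P y - (κ • P y + κ • (a k • P y)) := by abel
      _ = y := by rw [e1]; abel
  have h2 : ∀ y : H, ((1:H →L[ℂ] H) + P) (((1:H →L[ℂ] H) - κ • P) y) = y := by
    intro y
    simp only [ContinuousLinearMap.add_apply, ContinuousLinearMap.sub_apply,
      ContinuousLinearMap.one_apply, ContinuousLinearMap.smul_apply, map_sub, map_smul, hPP]
    have e1 : P y + a k • P y = (1 + a k) • P y := by rw [add_smul, one_smul]
    rw [e1, smul_smul, hκ, one_smul]
    abel
  set T : H ≃L[ℂ] H := ContinuousLinearEquiv.equivOfInverse _ _ h1 h2 with hT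
  refine ⟨fun n => T (b₀ n), ⟨b₀, T, fun n => rfl⟩, ?_⟩
  have hTb : ∀ n, T (b₀ n) = b₀ n + a n • b₀ k := by
    intro n
    rw [hT, ContinuousLinearEquiv.equivOfInverse_apply, ContinuousLinearMap.add_apply,
      ContinuousLinearMap.one_apply, hPb]
  have hcoef : ∀ n, (inner ℂ x (T (b₀ n)) : ℂ) = (d n : ℂ) := by
    intro n
    rw [hTb, inner_add_right, inner_smul_right, ← hc, ← hc, ha, div_mul_cancel₀ _ hk]
    ring
  rw [l1Norm]
  simp only [hcoef]
  by_contra htop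
  have hsum : Summable (fun n => ‖((d n : ℝ) : ℂ)‖₊) :=
    ENNReal.tsum_coe_ne_top_iff_summable.1 htop
  have hsumR : Summable (fun n : ℕ => 1 / ((n : ℝ) + 1)) := by
    have := NNReal.summable_coe.2 hsum
    refine this.congr fun n => ?_
    rw [coe_nnnorm, Complex.norm_real, Real.norm_eq_abs, hd, abs_of_nonneg (by positivity)]
  exact Real.not_summable_one_div_natCast
    ((summable_nat_add_iff 1).1 (hsumR.congr fun n => by push_cast; ring_nf))
end

section
/- There does not exist a Riesz basis E for H such that H_E ⊆ H_R for every Riesz basis R for H, where H_E = {x ∈ H : Σ_n |⟨x, e_n⟩| < ∞}. -/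
open scoped ENNReal NNReal

theorem stmt6 {H : Type*} [NormedAddCommGroup H] [InnerProductSpace ℂ H] [CompleteSpace H] (b₀ : HilbertBasis ℕ ℂ H) :
    ¬ ∃ e : ℕ → H, IsRieszBasis e ∧ ∀ r : ℕ → H, IsRieszBasis r → HE e ⊆ HE r := by
  rintro ⟨e, ⟨b, T, he⟩, hsub⟩
  classical
  set c : ℕ → ℂ := fun n => ((n : ℂ) + 1)⁻¹ with hc
  have hmem : Memℓp c 2 := by
    apply memℓp_gen
    have h2 : (2 : ℝ≥0∞).toReal = 2 := by norm_num
    have : Summable (fun n : ℕ => 1 / ((n : ℝ) + 1) ^ 2) := by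
      have := (_root_.summable_nat_add_iff 1).2
        (Real.summable_one_div_nat_pow.2 (by norm_num : 1 < 2))
      refine this.congr fun n => ?_
      push_cast
      ring
    refine this.congr fun n => ?_
    rw [h2]
    have : ‖c n‖ = ((n : ℝ) + 1)⁻¹ := by
      rw [hc]
      simp only [norm_inv]
      rw [show ((n : ℂ) + 1) = (((n : ℝ) + 1 : ℝ) : ℂ) by push_cast; ring, Complex.norm_real,
        Real.norm_eq_abs, abs_of_pos (by positivity)]
    rw [this]
    rw [Real.rpow_two]
    field_simp
  set f : lp (fun _ : ℕ => ℂ) 2 := ⟨c, hmem⟩ with hf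
  set y : H := b.repr.symm f with hy
  have hyb : ∀ n, (inner ℂ (b n) y : ℂ) = c n := by
    intro n
    rw [← b.repr_apply_apply, hy]
    simp [hf]
  have hbb : ∀ i j, (inner ℂ (b i) (b j) : ℂ) = if i = j then 1 else 0 :=
    orthonormal_iff_ite.mp b.orthonormal
  set w : H := y - b 0 with hw
  have hb0w : (inner ℂ (b 0) w : ℂ) = 0 := by
    rw [hw, inner_sub_right, hyb, hbb]
    simp [hc]
  set u : H →L[ℂ] H := (innerSL ℂ (b 0)).smulRight w with hu
  have huz : ∀ z, u z = (inner ℂ (b 0) z : ℂ) • w := fun z => rfl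
  have hu2 : u * u = 0 := by
    ext z
    simp only [ContinuousLinearMap.mul_apply, huz, inner_smul_right, hb0w,
      ContinuousLinearMap.zero_apply, mul_zero, zero_smul]
  have hcomp1 : (1 + u) * (1 - u) = 1 := by
    have : (1 + u) * (1 - u) = 1 - u * u := by noncomm_ring
    rw [this, hu2, sub_zero]
  have hcomp2 : (1 - u) * (1 + u) = 1 := by
    have : (1 - u) * (1 + u) = 1 - u * u := by noncomm_ring
    rw [this, hu2, sub_zero]
  set A : H →L[ℂ] H := ContinuousLinearMap.adjoint (1 + u) with hA
  set B : H →L[ℂ] H := ContinuousLinearMap.adjoint (1 - u) with hB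
  have hBA : ∀ z, B (A z) = z := by
    intro z
    have : B ∘L A = 1 := by
      rw [hA, hB, ← ContinuousLinearMap.adjoint_comp, ← ContinuousLinearMap.mul_def, hcomp1,
        ContinuousLinearMap.one_def, ContinuousLinearMap.adjoint_id]
    have := ContinuousLinearMap.ext_iff.mp this z
    simpa using this
  have hAB : ∀ z, A (B z) = z := by
    intro z
    have : A ∘L B = 1 := by
      rw [hA, hB, ← ContinuousLinearMap.adjoint_comp, ← ContinuousLinearMap.mul_def, hcomp2,
        ContinuousLinearMap.one_def, ContinuousLinearMap.adjoint_id]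
    have := ContinuousLinearMap.ext_iff.mp this z
    simpa using this
  set S : H ≃L[ℂ] H := ContinuousLinearEquiv.equivOfInverse ((T : H →L[ℂ] H) ∘L A)
    (B ∘L (T.symm : H →L[ℂ] H))
    (fun z => by simp [hBA])
    (fun z => by simp [hAB]) with hS
  set r : ℕ → H := fun n => S (b n) with hr
  have hrb : IsRieszBasis r := ⟨b, S, fun n => rfl⟩
  set x : H := ContinuousLinearMap.adjoint (T.symm : H →L[ℂ] H) (b 0) with hx
  have hxe : ∀ n, (inner ℂ x (e n) : ℂ) = if n = 0 then 1 else 0 := by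
    intro n
    rw [he n, hx, ContinuousLinearMap.adjoint_inner_left]
    simp only [ContinuousLinearEquiv.coe_coe, ContinuousLinearEquiv.symm_apply_apply]
    rw [hbb 0 n]
    simp [eq_comm]
  have hxHE : x ∈ HE e := by
    have : l1Norm e x = 1 := by
      unfold l1Norm
      have heq : ∀ n, (‖(inner ℂ x (e n) : ℂ)‖₊ : ℝ≥0∞) = if n = 0 then 1 else 0 := by
        intro n
        rw [hxe n]
        split <;> simp
      rw [tsum_congr heq, tsum_ite_eq]
    simp [HE, this]
  have hxr : x ∈ HE r := hsub r hrb hxHE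
  -- compute inner x (r n)
  have hub0 : (1 + u) (b 0) = y := by
    have : u (b 0) = w := by
      rw [huz, hbb 0 0]
      simp
    simp [ContinuousLinearMap.add_apply, this, hw]
  have hxrn : ∀ n, (inner ℂ x (r n) : ℂ) = starRingEnd ℂ (c n) := by
    intro n
    rw [hr, hS, hx]
    simp only [ContinuousLinearEquiv.equivOfInverse_apply, ContinuousLinearMap.coe_comp',
      Function.comp_apply, ContinuousLinearEquiv.coe_coe]
    rw [ContinuousLinearMap.adjoint_inner_left]
    simp only [ContinuousLinearEquiv.coe_coe, ContinuousLinearEquiv.symm_apply_apply]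
    rw [hA, ContinuousLinearMap.adjoint_inner_right, hub0, ← inner_conj_symm, hyb]
  have htop : l1Norm r x = ⊤ := by
    unfold l1Norm
    have heq : ∀ n, (‖(inner ℂ x (r n) : ℂ)‖₊ : ℝ≥0∞) = (((n : ℝ≥0) + 1)⁻¹ : ℝ≥0) := by
      intro n
      rw [hxrn n]
      congr 1
      rw [show (starRingEnd ℂ) (c n) = star (c n) from rfl, nnnorm_star, hc]
      simp only [nnnorm_inv]
      rw [show ((n : ℂ) + 1) = ((n + 1 : ℕ) : ℂ) by push_cast; ring, Complex.nnnorm_natCast]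
      push_cast
      ring
    rw [tsum_congr heq]
    by_contra h
    have hsum : Summable (fun n : ℕ => (((n : ℝ≥0) + 1)⁻¹ : ℝ≥0)) :=
      ENNReal.tsum_coe_ne_top_iff_summable.mp h
    have hsumR : Summable (fun n : ℕ => ((n : ℝ) + 1)⁻¹) := by
      have := NNReal.summable_coe.mpr hsum
      refine this.congr fun n => ?_
      push_cast
      ring
    have : Summable (fun n : ℕ => ((n : ℝ))⁻¹) := by
      rw [← summable_nat_add_iff 1]
      refine hsumR.congr fun n => ?_
      push_cast
      ring
    exact Real.not_summable_natCast_inv this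
  exact hxr htop
end

section
/- There does not exist a Riesz basis E for H such that H_R ⊆ H_E for every Riesz basis R for H, where H_E = {x ∈ H : Σ_n |⟨x, e_n⟩| < ∞}. -/
open scoped ENNReal NNReal

open ContinuousLinearMap in
theorem stmt7 {H : Type*} [NormedAddCommGroup H] [InnerProductSpace ℂ H] [CompleteSpace H] (b₀ : HilbertBasis ℕ ℂ H) :
    ¬ ∃ e : ℕ → H, IsRieszBasis e ∧ ∀ r : ℕ → H, IsRieszBasis r → HE r ⊆ HE e := by
  rintro ⟨e, ⟨b, T, he⟩, hdom⟩
  -- the coefficient sequence 1/(n+1), which is ℓ² but not ℓ¹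
  have hnorm : ∀ n : ℕ, ‖(((n : ℝ) + 1)⁻¹ : ℂ)‖ = ((n : ℝ) + 1)⁻¹ := by
    intro n
    have h : (((n : ℝ) + 1)⁻¹ : ℂ) = ((((n : ℝ) + 1)⁻¹ : ℝ) : ℂ) := by push_cast; ring
    rw [h, Complex.norm_real, Real.norm_eq_abs, abs_of_nonneg (by positivity)]
  have hsummable2 : Summable (fun n : ℕ => (((n : ℝ) + 1)⁻¹) ^ 2) := by
    have h2 : Summable (fun n : ℕ => ((n : ℝ)⁻¹) ^ 2) := by
      simpa [one_div, inv_pow] using (summable_one_div_nat_pow (p := 2)).2 one_lt_two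
    have h3 := (summable_nat_add_iff 1).2 h2
    exact h3.congr fun n => by push_cast; ring
  have hsq : Summable (fun n : ℕ => ‖(((n : ℝ) + 1)⁻¹ : ℂ)‖ ^ (2 : ℝ≥0∞).toReal) := by
    refine hsummable2.congr fun n => ?_
    rw [hnorm n, ENNReal.toReal_ofNat, Real.rpow_two]
  have hc2 : Memℓp (fun n : ℕ => (((n : ℝ) + 1)⁻¹ : ℂ)) 2 := memℓp_gen hsq
  set c : lp (fun _ : ℕ => ℂ) 2 := ⟨_, hc2⟩ with hc
  set y : H := b.repr.symm c with hy
  have hyb : ∀ n, (inner ℂ (b n) y : ℂ) = (((n : ℝ) + 1)⁻¹ : ℂ) := by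
    intro n
    rw [← b.repr_apply_apply]
    simp [hy, hc]
  have hy0 : y ≠ 0 := by
    intro h
    have h0 := hyb 0
    rw [h, inner_zero_right] at h0
    norm_num at h0
  -- x := (T†)⁻¹ y
  set x : H := adjoint ((T.symm : H →L[ℂ] H)) y with hx
  have hTx : adjoint ((T : H →L[ℂ] H)) x = y := by
    apply ext_inner_left ℂ
    intro w
    rw [adjoint_inner_right, hx, adjoint_inner_right]
    simp
  have hxe : ∀ n, (inner ℂ x (e n) : ℂ) = inner ℂ y (b n) := by
    intro n
    calc (inner ℂ x (e n) : ℂ) = inner ℂ x ((T : H →L[ℂ] H) (b n)) := by rw [he n]; rfl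
      _ = inner ℂ (adjoint ((T : H →L[ℂ] H)) x) (b n) := (adjoint_inner_left _ _ _).symm
      _ = inner ℂ y (b n) := by rw [hTx]
  have hx0 : x ≠ 0 := by
    intro h
    rw [h, map_zero] at hTx
    exact hy0 hTx.symm
  -- l1Norm e x = ⊤
  have hxnotHE : x ∉ HE e := by
    simp only [HE, Set.mem_setOf_eq, not_not, l1Norm]
    have hterm : ∀ n, (‖(inner ℂ x (e n) : ℂ)‖₊ : ℝ≥0∞) = ENNReal.ofReal (((n : ℝ) + 1)⁻¹) := by
      intro n
      rw [show ((‖(inner ℂ x (e n) : ℂ)‖₊ : ℝ≥0∞)) = ENNReal.ofReal ‖(inner ℂ x (e n) : ℂ)‖ from (ofReal_norm _).symm]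
      congr 1
      rw [hxe n, ← inner_conj_symm, hyb n, RCLike.norm_conj, hnorm n]
    rw [tsum_congr hterm]
    -- harmonic series diverges
    by_contra hne
    have hsummable : Summable (fun n : ℕ => ((n : ℝ) + 1)⁻¹) := by
      have ht := ENNReal.summable_toReal hne
      refine ht.congr fun n => ?_
      rw [ENNReal.toReal_ofReal (by positivity)]
    have hsum2 : Summable (fun n : ℕ => ((n : ℝ))⁻¹) := by
      rw [← summable_nat_add_iff 1]
      exact hsummable.congr fun n => by push_cast; ring_nf
    exact Real.not_summable_natCast_inv hsum2
  -- construct W with W x = b 0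
  have hb0 : b 0 ≠ 0 := by
    intro h
    have h0 := hyb 0
    rw [h, inner_zero_left] at h0
    norm_num at h0
  obtain ⟨W, hW⟩ := SeparatingDual.exists_continuousLinearEquiv_apply_eq (R := ℂ) hx0 hb0
  -- S := W† as an equivalence
  have h1 : Function.LeftInverse (adjoint ((W.symm : H →L[ℂ] H)))
      (adjoint ((W : H →L[ℂ] H))) := by
    intro v
    apply ext_inner_left ℂ
    intro w
    rw [adjoint_inner_right, adjoint_inner_right]
    simp
  have h2 : Function.RightInverse (adjoint ((W.symm : H →L[ℂ] H)))
      (adjoint ((W : H →L[ℂ] H))) := by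
    intro v
    apply ext_inner_left ℂ
    intro w
    rw [adjoint_inner_right, adjoint_inner_right]
    simp
  set S : H ≃L[ℂ] H :=
    ContinuousLinearEquiv.equivOfInverse (adjoint ((W : H →L[ℂ] H)))
      (adjoint ((W.symm : H →L[ℂ] H))) h1 h2 with hS
  set r : ℕ → H := fun n => S (b n) with hr
  have hrRiesz : IsRieszBasis r := ⟨b, S, fun n => rfl⟩
  have hxr : x ∈ HE r := by
    simp only [HE, Set.mem_setOf_eq, l1Norm]
    have hterm : ∀ n, (‖(inner ℂ x (r n) : ℂ)‖₊ : ℝ≥0∞) = if n = 0 then 1 else 0 := by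
      intro n
      have hin : (inner ℂ x (r n) : ℂ) = inner ℂ (b 0) (b n) := by
        rw [hr]
        simp only [hS, ContinuousLinearEquiv.equivOfInverse_apply]
        rw [adjoint_inner_right]
        simp only [ContinuousLinearEquiv.coe_coe]
        rw [hW]
      rw [hin, orthonormal_iff_ite.mp b.orthonormal 0 n]
      by_cases h : n = 0 <;> simp [h, eq_comm]
    rw [tsum_congr hterm]
    rw [tsum_eq_single 0 (by intro n hn; simp [hn])]
    simp
  exact hxnotHE (hdom r hrRiesz hxr)
end

section
/- There exist Riesz bases E and R for a separable infinite-dimensional complex Hilbert space H such that H_E ∩ H_R = {0}. -/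
open scoped ENNReal NNReal

open scoped ENNReal NNReal ComplexConjugate

set_option maxHeartbeats 1000000

noncomputable section

namespace Stmt8Aux

def alf (m : ℕ) : ℝ := 1 / (2 * ((m : ℝ) + 1))

lemma alf_pos (m : ℕ) : 0 < alf m := by unfold alf; positivity

lemma alf_sq_hasSum : HasSum (fun m : ℕ => alf m ^ 2) (Real.pi ^ 2 / 24) := by
  have h := hasSum_zeta_two
  have h1 : HasSum (fun m : ℕ => 1 / ((m : ℝ) + 1) ^ 2) (Real.pi ^ 2 / 6) := by
    have := (hasSum_nat_add_iff (f := fun n : ℕ => 1 / (n : ℝ) ^ 2) 1).2 (by simpa using h)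
    refine this.congr_fun fun n => ?_
    push_cast
    ring
  have h2 := h1.mul_left (1 / 4)
  have h3 : HasSum (fun m : ℕ => alf m ^ 2) (1 / 4 * (Real.pi ^ 2 / 6)) :=
    h2.congr_fun fun m => by unfold alf; field_simp; ring
  convert h3 using 1
  ring

lemma alf_sq_summable : Summable (fun m : ℕ => alf m ^ 2) := alf_sq_hasSum.summable

lemma alf_sq_tsum_le : ∑' m : ℕ, alf m ^ 2 ≤ 2 / 3 := by
  rw [alf_sq_hasSum.tsum_eq]
  nlinarith [Real.pi_le_four, Real.pi_pos]

lemma alf_not_summable : ¬ Summable alf := by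
  intro h
  have h2 : Summable (fun m : ℕ => 1 / ((m : ℝ) + 1)) := by
    have := h.mul_left 2
    refine this.congr fun m => ?_
    unfold alf
    field_simp
  have h3 : Summable (fun n : ℕ => 1 / (n : ℝ)) := by
    rw [← summable_nat_add_iff 1]
    refine h2.congr fun n => ?_
    push_cast
    ring
  exact Real.not_summable_one_div_natCast h3

local notation "K" => lp (fun _ : ℕ => ℂ) 2

lemma two_toReal : ((2 : ℝ≥0∞).toReal) = (2 : ℝ) := by norm_num

lemma rpow_two_eq (r : ℝ) (hr : 0 ≤ r) : r ^ ((2 : ℝ≥0∞).toReal) = r ^ (2 : ℕ) := by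
  rw [two_toReal, ← Real.rpow_natCast r 2]
  norm_num

lemma x_sq_summable (x : K) : Summable (fun k : ℕ => ‖x k‖ ^ (2 : ℕ)) := by
  have := (lp.memℓp x).summable (by norm_num : 0 < (2 : ℝ≥0∞).toReal)
  exact this.congr fun k => rpow_two_eq _ (norm_nonneg _)

lemma prod_summable (x : K) :
    Summable (fun q : ℕ × ℕ => ‖x q.1‖ ^ (2 : ℕ) * alf q.2 ^ 2) :=
  Summable.mul_of_nonneg (x_sq_summable x) alf_sq_summable
    (fun k => by positivity) (fun m => by positivity)

lemma psi_fun_norm (x : K) (n : ℕ) :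
    ‖(alf n.unpair.2 : ℂ) * x n.unpair.1‖ ^ (2 : ℕ)
      = ‖x n.unpair.1‖ ^ (2 : ℕ) * alf n.unpair.2 ^ 2 := by
  rw [norm_mul, Complex.norm_real, Real.norm_eq_abs, abs_of_pos (alf_pos _)]
  ring

lemma mem_psi (x : K) :
    Memℓp (fun n : ℕ => (alf n.unpair.2 : ℂ) * x n.unpair.1) 2 := by
  apply memℓp_gen
  have h : Summable ((fun q : ℕ × ℕ => ‖x q.1‖ ^ (2 : ℕ) * alf q.2 ^ 2) ∘ Nat.pairEquiv.symm) :=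
    (Nat.pairEquiv.symm.summable_iff).2 (prod_summable x)
  refine h.congr fun n => ?_
  simp only [Function.comp_apply]
  rw [rpow_two_eq _ (norm_nonneg _), psi_fun_norm]
  rfl

lemma psi_tsum_le (x : K) :
    ∑' n : ℕ, ‖(alf n.unpair.2 : ℂ) * x n.unpair.1‖ ^ (2 : ℕ) ≤ 2 / 3 * ‖x‖ ^ (2 : ℕ) := by
  have e1 : ∑' n : ℕ, ‖(alf n.unpair.2 : ℂ) * x n.unpair.1‖ ^ (2 : ℕ)
      = ∑' q : ℕ × ℕ, ‖x q.1‖ ^ (2 : ℕ) * alf q.2 ^ 2 := by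
    rw [← Nat.pairEquiv.symm.tsum_eq]
    exact tsum_congr fun n => by rw [psi_fun_norm]; rfl
  rw [e1, Summable.tsum_prod' (prod_summable x) (fun k => alf_sq_summable.mul_left (‖x k‖ ^ (2 : ℕ)))]
  have e2 : ∀ k : ℕ, ∑' m : ℕ, ‖x k‖ ^ (2:ℕ) * alf m ^ 2 = ‖x k‖ ^ (2:ℕ) * ∑' m, alf m ^ 2 :=
    fun k => tsum_mul_left
  rw [tsum_congr e2, tsum_mul_right]
  have hx : ∑' k, ‖x k‖ ^ (2 : ℕ) = ‖x‖ ^ (2 : ℕ) := by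
    have := lp.norm_rpow_eq_tsum (p := 2) (by norm_num) x
    rw [rpow_two_eq _ (lp.norm_nonneg' x)] at this
    rw [this]
    exact tsum_congr fun k => (rpow_two_eq _ (norm_nonneg _)).symm
  rw [hx]
  have h1 : (0:ℝ) ≤ ‖x‖ ^ (2:ℕ) := by positivity
  calc ‖x‖ ^ 2 * ∑' m, alf m ^ 2 ≤ ‖x‖ ^ 2 * (2/3) :=
        mul_le_mul_of_nonneg_left alf_sq_tsum_le h1
    _ = 2/3 * ‖x‖ ^ 2 := by ring

/-- The bounded operator `(Ψ x)ₙ = α_{n₂} · x_{n₁}`. -/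
def PsiL : K →ₗ[ℂ] K where
  toFun x := ⟨fun n : ℕ => (alf n.unpair.2 : ℂ) * x n.unpair.1, mem_psi x⟩
  map_add' x y := by
    apply lp.ext
    funext n
    simp [mul_add]
    rfl
  map_smul' c x := by
    apply lp.ext
    funext n
    simp
    ring

lemma psiL_norm_le (x : K) : ‖PsiL x‖ ≤ Real.sqrt (2/3) * ‖x‖ := by
  refine lp.norm_le_of_tsum_le (by norm_num) (by positivity) ?_
  have hC : (Real.sqrt (2/3) * ‖x‖) ^ ((2:ℝ≥0∞).toReal) = 2/3 * ‖x‖ ^ (2:ℕ) := by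
    rw [rpow_two_eq _ (by positivity)]
    rw [mul_pow, Real.sq_sqrt (by norm_num : (0:ℝ) ≤ 2/3)]
  rw [hC]
  have : ∀ n : ℕ, ‖(PsiL x) n‖ ^ ((2:ℝ≥0∞).toReal) = ‖(alf n.unpair.2 : ℂ) * x n.unpair.1‖ ^ (2:ℕ) :=
    fun n => rpow_two_eq _ (norm_nonneg _)
  rw [tsum_congr this]
  exact psi_tsum_le x

def Psi : K →L[ℂ] K := PsiL.mkContinuous (Real.sqrt (2/3)) psiL_norm_le

lemma psi_apply (x : K) (n : ℕ) : (Psi x) n = (alf n.unpair.2 : ℂ) * x n.unpair.1 := rfl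

lemma psi_norm_le : ‖Psi‖ ≤ Real.sqrt (2/3) :=
  LinearMap.mkContinuous_norm_le _ (by positivity) _

variable {H : Type*} [NormedAddCommGroup H] [InnerProductSpace ℂ H] [CompleteSpace H]

def Wop (b : HilbertBasis ℕ ℂ H) : H →L[ℂ] H :=
  ((b.repr.symm.toContinuousLinearEquiv : K ≃L[ℂ] H) : K →L[ℂ] H) ∘L
    (ContinuousLinearMap.adjoint Psi) ∘L
      ((b.repr.toContinuousLinearEquiv : H ≃L[ℂ] K) : H →L[ℂ] K)

lemma Wop_apply (b : HilbertBasis ℕ ℂ H) (h : H) :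
    Wop b h = b.repr.symm (ContinuousLinearMap.adjoint Psi (b.repr h)) := rfl

lemma Wop_norm_lt (b : HilbertBasis ℕ ℂ H) : ‖Wop b‖ < 1 := by
  have hs : Real.sqrt (2/3) < 1 := by
    have : Real.sqrt (2/3) < Real.sqrt 1 := Real.sqrt_lt_sqrt (by norm_num) (by norm_num)
    simpa using this
  refine lt_of_le_of_lt ?_ hs
  refine ContinuousLinearMap.opNorm_le_bound _ (by positivity) fun h => ?_
  rw [Wop_apply, LinearIsometryEquiv.norm_map]
  calc ‖ContinuousLinearMap.adjoint Psi (b.repr h)‖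
      ≤ ‖ContinuousLinearMap.adjoint Psi‖ * ‖b.repr h‖ :=
        ContinuousLinearMap.le_opNorm _ _
    _ = ‖Psi‖ * ‖h‖ := by
        rw [(ContinuousLinearMap.adjoint :
            (K →L[ℂ] K) ≃ₗᵢ⋆[ℂ] (K →L[ℂ] K)).norm_map Psi,
          LinearIsometryEquiv.norm_map]
    _ ≤ Real.sqrt (2/3) * ‖h‖ :=
        mul_le_mul_of_nonneg_right psi_norm_le (norm_nonneg _)

lemma negW_lt (b : HilbertBasis ℕ ℂ H) : ‖-(Wop b)‖ < 1 := by
  rw [norm_neg]; exact Wop_norm_lt b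

def Top (b : HilbertBasis ℕ ℂ H) : H ≃L[ℂ] H :=
  ContinuousLinearEquiv.ofUnit (Units.oneSub (-(Wop b)) (negW_lt b))

lemma Top_apply (b : HilbertBasis ℕ ℂ H) (v : H) : Top b v = v + Wop b v := by
  have h0 : Top b v = ((Units.oneSub (-(Wop b)) (negW_lt b) : (H →L[ℂ] H)ˣ) :
      H →L[ℂ] H) v := rfl
  rw [h0, Units.val_oneSub, sub_neg_eq_add, ContinuousLinearMap.add_apply,
    ContinuousLinearMap.one_apply]

lemma inner_W (b : HilbertBasis ℕ ℂ H) (x : H) (n : ℕ) :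
    (inner ℂ x (Wop b (b n)) : ℂ) = conj ((alf n.unpair.2 : ℂ) * (b.repr x) n.unpair.1) := by
  rw [Wop_apply]
  have h1 : (inner ℂ x (b.repr.symm (ContinuousLinearMap.adjoint Psi (b.repr (b n)))) : ℂ)
      = inner ℂ (b.repr x) (ContinuousLinearMap.adjoint Psi (b.repr (b n))) := by
    conv_lhs => rw [← b.repr.symm_apply_apply x]
    exact b.repr.symm.inner_map_map _ _
  rw [h1, ContinuousLinearMap.adjoint_inner_right, b.repr_self, lp.inner_single_right,
    psi_apply]
  simp [RCLike.inner_apply]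

lemma inner_basis (b : HilbertBasis ℕ ℂ H) (x : H) (n : ℕ) :
    (inner ℂ x (b n) : ℂ) = conj (b.repr x n) := by
  rw [b.repr_apply_apply, inner_conj_symm]

end Stmt8Aux

end

open Stmt8Aux

theorem stmt8 {H : Type*} [NormedAddCommGroup H] [InnerProductSpace ℂ H] [CompleteSpace H] (b₀ : HilbertBasis ℕ ℂ H) :
    ∃ e r : ℕ → H, IsRieszBasis e ∧ IsRieszBasis r ∧ HE e ∩ HE r = {0} := by
  classical
  refine ⟨fun n => b₀ n, fun n => Top b₀ (b₀ n),
    ⟨b₀, ContinuousLinearEquiv.refl ℂ H, fun n => rfl⟩,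
    ⟨b₀, Top b₀, fun n => rfl⟩, ?_⟩
  apply Set.eq_of_subset_of_subset
  · rintro x ⟨hx1, hx2⟩
    simp only [HE, Set.mem_setOf_eq, l1Norm] at hx1 hx2
    have hkey : ∀ k, b₀.repr x k = 0 := by
      intro k
      by_contra hk0
      have hinj : Function.Injective (fun m : ℕ => Nat.pair k m) := by
        intro m1 m2 hh
        have := congrArg Nat.unpair hh
        simpa [Nat.unpair_pair] using this
      have hr : ∑' m : ℕ, (‖(inner ℂ x (Top b₀ (b₀ (Nat.pair k m))) : ℂ)‖₊ : ℝ≥0∞) ≠ ⊤ :=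
        ne_top_of_le_ne_top hx2 (ENNReal.tsum_comp_le_tsum_of_injective hinj _)
      have he : ∑' m : ℕ, (‖(inner ℂ x (b₀ (Nat.pair k m)) : ℂ)‖₊ : ℝ≥0∞) ≠ ⊤ :=
        ne_top_of_le_ne_top hx1 (ENNReal.tsum_comp_le_tsum_of_injective hinj _)
      have hpt : ∀ m : ℕ, (‖alf m‖₊ : ℝ≥0∞) * (‖b₀.repr x k‖₊ : ℝ≥0∞)
          ≤ (‖(inner ℂ x (Top b₀ (b₀ (Nat.pair k m))) : ℂ)‖₊ : ℝ≥0∞)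
            + (‖(inner ℂ x (b₀ (Nat.pair k m)) : ℂ)‖₊ : ℝ≥0∞) := by
        intro m
        have hTn : (inner ℂ x (Top b₀ (b₀ (Nat.pair k m))) : ℂ)
            = inner ℂ x (b₀ (Nat.pair k m)) + conj ((alf m : ℂ) * b₀.repr x k) := by
          rw [Top_apply, inner_add_right, inner_W]
          simp [Nat.unpair_pair]
        have hnn : ‖alf m‖₊ * ‖b₀.repr x k‖₊
            ≤ ‖(inner ℂ x (Top b₀ (b₀ (Nat.pair k m))) : ℂ)‖₊
              + ‖(inner ℂ x (b₀ (Nat.pair k m)) : ℂ)‖₊ := by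
          have h2 : conj ((alf m : ℂ) * b₀.repr x k)
              = (inner ℂ x (Top b₀ (b₀ (Nat.pair k m))) : ℂ)
                - inner ℂ x (b₀ (Nat.pair k m)) := by rw [hTn]; ring
          calc ‖alf m‖₊ * ‖b₀.repr x k‖₊ = ‖conj ((alf m : ℂ) * b₀.repr x k)‖₊ := by
                rw [RCLike.nnnorm_conj, nnnorm_mul, Complex.nnnorm_real]
            _ ≤ _ := by rw [h2]; exact nnnorm_sub_le _ _
        calc (‖alf m‖₊ : ℝ≥0∞) * (‖b₀.repr x k‖₊ : ℝ≥0∞)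
            = ((‖alf m‖₊ * ‖b₀.repr x k‖₊ : ℝ≥0) : ℝ≥0∞) := by rw [ENNReal.coe_mul]
          _ ≤ _ := by
              rw [← ENNReal.coe_add]
              exact ENNReal.coe_le_coe.2 hnn
      have hsum := ENNReal.tsum_le_tsum hpt
      rw [ENNReal.tsum_add, ENNReal.tsum_mul_right] at hsum
      have htop : ∑' m : ℕ, (‖alf m‖₊ : ℝ≥0∞) = ⊤ := by
        by_contra hne
        have hs : Summable (fun m => ‖alf m‖₊) := ENNReal.tsum_coe_ne_top_iff_summable.1 hne
        have hs2 : Summable (fun m => (‖alf m‖₊ : ℝ)) := NNReal.summable_coe.2 hs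
        refine alf_not_summable (hs2.congr fun m => ?_)
        rw [coe_nnnorm, Real.norm_eq_abs, abs_of_pos (alf_pos m)]
      rw [htop, ENNReal.top_mul (by
        simpa using (nnnorm_ne_zero_iff.2 hk0))] at hsum
      exact ENNReal.add_ne_top.2 ⟨hr, he⟩ (top_le_iff.1 hsum)
    have hrx : b₀.repr x = 0 := by
      apply lp.ext
      funext kk
      simpa using hkey kk
    have hx0 : x = 0 := by simpa using congrArg b₀.repr.symm hrx
    simp [hx0]
  · rintro x hx
    simp only [Set.mem_singleton_iff] at hx
    subst hx
    constructor <;> simp [HE, l1Norm, inner_zero_left]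
end

section
/- There exists a frame F = {w_n} for H that is norm-bounded below (inf_n ‖w_n‖ > 0) such that the only x ∈ H with Σ_n |⟨x, w_n⟩| < ∞ is x = 0. -/
open scoped ENNReal NNReal

noncomputable section

namespace Stmt9Aux

def qE : (ℕ × ℕ) × Bool ≃ ℕ :=
  (Equiv.prodComm _ _).trans <|
    (Equiv.prodCongr (Equiv.refl Bool) Nat.pairEquiv).trans Equiv.boolProdNatEquivNat

def eps (j : ℕ) : ℝ≥0 := ((j : ℝ≥0) + 2)⁻¹

def sgn (i : (ℕ × ℕ) × Bool) : ℂ := (if i.2 then 1 else -1) * ((eps i.1.2 : ℝ) : ℂ)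

lemma nnnorm_sgn (i : (ℕ × ℕ) × Bool) : ‖sgn i‖₊ = eps i.1.2 := by
  ext
  rw [coe_nnnorm]
  rcases i with ⟨⟨k, j⟩, σ⟩
  cases σ <;>
    simp [sgn, norm_mul, Complex.norm_real, abs_of_nonneg (eps j).coe_nonneg]

lemma eps_le_half (j : ℕ) : eps j ≤ 2⁻¹ := by
  rw [eps, inv_le_inv₀ (by positivity) (by norm_num)]
  exact le_add_self

lemma not_summable_eps : ¬ Summable eps := by
  rw [← NNReal.summable_coe]
  have h : ¬ Summable (fun n : ℕ => ((n : ℝ))⁻¹) := Real.not_summable_natCast_inv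
  have hiff := (summable_nat_add_iff (f := fun n : ℕ => ((n : ℝ))⁻¹) 2)
  intro hs
  exact h (hiff.mp (by convert hs using 2 with j <;> first | rfl | (push_cast [eps]; norm_num)))

lemma tsum_eps_top : ∑' j, (eps j : ℝ≥0∞) = ⊤ := by
  by_contra hne
  exact not_summable_eps (ENNReal.tsum_coe_ne_top_iff_summable.mp hne)

lemma summable_eps_sq : Summable (fun j => eps j ^ 2) := by
  rw [← NNReal.summable_coe]
  have h : Summable (fun n : ℕ => ((n : ℝ))⁻¹ ^ 2) := by
    simpa using Real.summable_one_div_nat_pow.mpr (by norm_num : 1 < 2)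
  have h2 := (summable_nat_add_iff (f := fun n : ℕ => ((n : ℝ))⁻¹ ^ 2) 2).mpr h
  convert h2 using 2 with j <;> first | rfl | (push_cast [eps]; norm_num)

/-- the ℝ≥0 value of `∑ ε_j²`. -/
def S : ℝ≥0 := ∑' j, eps j ^ 2

lemma tsum_eps_sq : ∑' j, (eps j : ℝ≥0∞) ^ 2 = (S : ℝ≥0∞) := by
  rw [S, ENNReal.coe_tsum summable_eps_sq]
  push_cast
  rfl

lemma aux_sq (z : ℂ) : Complex.reCLM (z * (starRingEnd ℂ) z) = ‖z‖ ^ 2 := by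
  simp [Complex.mul_conj, Complex.normSq_eq_norm_sq,
    ← Complex.ofReal_pow, Complex.ofReal_re]

lemma pll (a t : ℂ) :
    (‖a - t‖₊ : ℝ≥0∞) ^ 2 + (‖a + t‖₊ : ℝ≥0∞) ^ 2
      = 2 * (‖a‖₊ : ℝ≥0∞) ^ 2 + 2 * (‖t‖₊ : ℝ≥0∞) ^ 2 := by
  have h := parallelogram_law_with_nnnorm ℂ a t
  have h2 : ‖a - t‖₊ ^ 2 + ‖a + t‖₊ ^ 2 = 2 * ‖a‖₊ ^ 2 + 2 * ‖t‖₊ ^ 2 := by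
    rw [add_comm]
    rw [mul_add] at h
    exact h
  calc (‖a - t‖₊ : ℝ≥0∞) ^ 2 + (‖a + t‖₊ : ℝ≥0∞) ^ 2
      = ((‖a - t‖₊ ^ 2 + ‖a + t‖₊ ^ 2 : ℝ≥0) : ℝ≥0∞) := by push_cast; ring
    _ = ((2 * ‖a‖₊ ^ 2 + 2 * ‖t‖₊ ^ 2 : ℝ≥0) : ℝ≥0∞) := by rw [h2]
    _ = 2 * (‖a‖₊ : ℝ≥0∞) ^ 2 + 2 * (‖t‖₊ : ℝ≥0∞) ^ 2 := by push_cast; ring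

lemma pl1 (a t : ℂ) : 2 * (‖t‖₊ : ℝ≥0∞) ≤ (‖a - t‖₊ : ℝ≥0∞) + (‖a + t‖₊ : ℝ≥0∞) := by
  have h : (2 : ℝ≥0) * ‖t‖₊ ≤ ‖a - t‖₊ + ‖a + t‖₊ := by
    have h1 : ‖(a + t) - (a - t)‖₊ ≤ ‖a + t‖₊ + ‖a - t‖₊ := nnnorm_sub_le _ _
    have h2 : (a + t) - (a - t) = 2 * t := by ring
    rw [h2, nnnorm_mul] at h1
    have h3 : ‖(2 : ℂ)‖₊ = 2 := by
      ext; simp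
    rw [h3] at h1
    calc (2:ℝ≥0) * ‖t‖₊ ≤ ‖a + t‖₊ + ‖a - t‖₊ := h1
      _ = ‖a - t‖₊ + ‖a + t‖₊ := by ring
  calc 2 * (‖t‖₊ : ℝ≥0∞) = (((2:ℝ≥0) * ‖t‖₊ : ℝ≥0) : ℝ≥0∞) := by push_cast; ring
    _ ≤ ((‖a - t‖₊ + ‖a + t‖₊ : ℝ≥0) : ℝ≥0∞) := by exact_mod_cast h
    _ = (‖a - t‖₊ : ℝ≥0∞) + (‖a + t‖₊ : ℝ≥0∞) := by push_cast; ring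

variable {H : Type*} [NormedAddCommGroup H] [InnerProductSpace ℂ H] [CompleteSpace H]

def W (b₀ : HilbertBasis ℕ ℂ H) (i : (ℕ × ℕ) × Bool) : H :=
  b₀ (Nat.pairEquiv i.1) + sgn i • b₀ i.1.1

omit [CompleteSpace H] in
lemma inner_W (b₀ : HilbertBasis ℕ ℂ H) (x : H) (i : (ℕ × ℕ) × Bool) :
    (inner ℂ x (W b₀ i) : ℂ)
      = inner ℂ x (b₀ (Nat.pairEquiv i.1)) + sgn i * inner ℂ x (b₀ i.1.1) := by
  simp [W, inner_add_right, inner_smul_right]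

lemma parseval' (b₀ : HilbertBasis ℕ ℂ H) (x : H) :
    HasSum (fun n => ‖(inner ℂ x (b₀ n) : ℂ)‖ ^ 2) (‖x‖ ^ 2) := by
  have h := b₀.hasSum_inner_mul_inner x x
  have key : ∀ n : ℕ, (inner ℂ (b₀ n) x : ℂ) = (starRingEnd ℂ) (inner ℂ x (b₀ n)) :=
    fun n => (inner_conj_symm (b₀ n) x).symm
  simp only [key] at h
  have h2 := h.mapL Complex.reCLM
  simp only [aux_sq] at h2
  have hx : Complex.reCLM ((inner ℂ x x : ℂ)) = ‖x‖ ^ 2 := by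
    simp [← inner_self_eq_norm_sq (𝕜 := ℂ), RCLike.re_to_complex]
  rwa [hx] at h2

lemma parseval (b₀ : HilbertBasis ℕ ℂ H) (x : H) :
    ∑' n, (‖(inner ℂ x (b₀ n) : ℂ)‖₊ : ℝ≥0∞) ^ 2 = (‖x‖₊ : ℝ≥0∞) ^ 2 := by
  have h2 : HasSum (fun n => (‖(inner ℂ x (b₀ n) : ℂ)‖₊ ^ 2 : ℝ≥0)) (‖x‖₊ ^ 2) := by
    rw [← NNReal.hasSum_coe]
    push_cast
    exact parseval' b₀ x
  calc ∑' n, (‖(inner ℂ x (b₀ n) : ℂ)‖₊ : ℝ≥0∞) ^ 2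
      = ∑' n, ((‖(inner ℂ x (b₀ n) : ℂ)‖₊ ^ 2 : ℝ≥0) : ℝ≥0∞) :=
        tsum_congr fun n => by push_cast; ring
    _ = ((‖x‖₊ ^ 2 : ℝ≥0) : ℝ≥0∞) := ENNReal.tsum_coe_eq h2
    _ = (‖x‖₊ : ℝ≥0∞) ^ 2 := by push_cast; ring

/-- Main frame sum computation. -/
lemma frame_sum (b₀ : HilbertBasis ℕ ℂ H) (x : H) :
    ∑' i : (ℕ × ℕ) × Bool, (‖(inner ℂ x (W b₀ i) : ℂ)‖₊ : ℝ≥0∞) ^ 2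
      = ((2 + 2 * S : ℝ≥0) : ℝ≥0∞) * (‖x‖₊ : ℝ≥0∞) ^ 2 := by
  set c : ℕ → ℂ := fun n => inner ℂ x (b₀ n) with hc
  have hterm : ∀ kj : ℕ × ℕ,
      (‖(inner ℂ x (W b₀ (kj, false)) : ℂ)‖₊ : ℝ≥0∞) ^ 2
        + (‖(inner ℂ x (W b₀ (kj, true)) : ℂ)‖₊ : ℝ≥0∞) ^ 2
      = 2 * (‖c (Nat.pairEquiv kj)‖₊ : ℝ≥0∞) ^ 2
        + 2 * ((eps kj.2 : ℝ≥0∞) * (‖c kj.1‖₊ : ℝ≥0∞)) ^ 2 := by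
    intro kj
    rw [inner_W, inner_W]
    have hf : sgn (kj, false) = -(((eps kj.2 : ℝ) : ℂ)) := by simp [sgn]
    have ht : sgn (kj, true) = ((eps kj.2 : ℝ) : ℂ) := by simp [sgn]
    rw [hf, ht]
    have e1 : c (Nat.pairEquiv kj) + -(((eps kj.2 : ℝ) : ℂ)) * c kj.1
        = c (Nat.pairEquiv kj) - ((eps kj.2 : ℝ) : ℂ) * c kj.1 := by ring
    rw [e1, pll]
    congr 1
    rw [nnnorm_mul]
    have : ‖(((eps kj.2 : ℝ)) : ℂ)‖₊ = eps kj.2 := by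
      ext
      simp [Complex.norm_real, abs_of_nonneg (eps kj.2).coe_nonneg]
    rw [this]
    push_cast
    ring
  rw [ENNReal.tsum_prod (f := fun kj σ => (‖(inner ℂ x (W b₀ (kj, σ)) : ℂ)‖₊ : ℝ≥0∞) ^ 2)]
  calc ∑' kj : ℕ × ℕ, ∑' σ : Bool, (‖(inner ℂ x (W b₀ (kj, σ)) : ℂ)‖₊ : ℝ≥0∞) ^ 2
      = ∑' kj : ℕ × ℕ, (2 * (‖c (Nat.pairEquiv kj)‖₊ : ℝ≥0∞) ^ 2
          + 2 * ((eps kj.2 : ℝ≥0∞) * (‖c kj.1‖₊ : ℝ≥0∞)) ^ 2) := by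
        exact tsum_congr fun kj => by rw [tsum_bool]; exact hterm kj
    _ = 2 * (∑' kj : ℕ × ℕ, (‖c (Nat.pairEquiv kj)‖₊ : ℝ≥0∞) ^ 2)
          + 2 * ∑' kj : ℕ × ℕ, ((eps kj.2 : ℝ≥0∞) * (‖c kj.1‖₊ : ℝ≥0∞)) ^ 2 := by
        rw [ENNReal.tsum_add, ENNReal.tsum_mul_left, ENNReal.tsum_mul_left]
    _ = 2 * (‖x‖₊ : ℝ≥0∞) ^ 2 + 2 * ((S : ℝ≥0∞) * (‖x‖₊ : ℝ≥0∞) ^ 2) := by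
        congr 1
        · rw [Equiv.tsum_eq Nat.pairEquiv (fun n => (‖c n‖₊ : ℝ≥0∞) ^ 2), parseval]
        · congr 1
          rw [ENNReal.tsum_prod (f := fun k j => ((eps j : ℝ≥0∞) * (‖c k‖₊ : ℝ≥0∞)) ^ 2)]
          calc ∑' k, ∑' j, ((eps j : ℝ≥0∞) * (‖c k‖₊ : ℝ≥0∞)) ^ 2
              = ∑' k, (‖c k‖₊ : ℝ≥0∞) ^ 2 * ∑' j, (eps j : ℝ≥0∞) ^ 2 := by
                refine tsum_congr fun k => ?_
                rw [← ENNReal.tsum_mul_left]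
                exact tsum_congr fun j => by ring
            _ = (∑' j, (eps j : ℝ≥0∞) ^ 2) * ∑' k, (‖c k‖₊ : ℝ≥0∞) ^ 2 := by
                rw [ENNReal.tsum_mul_right]; ring
            _ = (S : ℝ≥0∞) * (‖x‖₊ : ℝ≥0∞) ^ 2 := by rw [tsum_eps_sq, parseval]
    _ = ((2 + 2 * S : ℝ≥0) : ℝ≥0∞) * (‖x‖₊ : ℝ≥0∞) ^ 2 := by push_cast; ring

lemma l1_slice (b₀ : HilbertBasis ℕ ℂ H) (x : H) (k : ℕ)
    (hk : (inner ℂ x (b₀ k) : ℂ) ≠ 0) :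
    ∑' i : (ℕ × ℕ) × Bool, (‖(inner ℂ x (W b₀ i) : ℂ)‖₊ : ℝ≥0∞) = ⊤ := by
  set c : ℕ → ℂ := fun n => inner ℂ x (b₀ n) with hc
  rw [ENNReal.tsum_prod (f := fun kj σ => (‖(inner ℂ x (W b₀ (kj, σ)) : ℂ)‖₊ : ℝ≥0∞))]
  refine top_unique ?_
  have step1 : (⊤ : ℝ≥0∞) ≤ ∑' j, ∑' σ : Bool,
      (‖(inner ℂ x (W b₀ ((k, j), σ)) : ℂ)‖₊ : ℝ≥0∞) := by
    have hterm : ∀ j, 2 * (eps j : ℝ≥0∞) * (‖c k‖₊ : ℝ≥0∞)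
        ≤ ∑' σ : Bool, (‖(inner ℂ x (W b₀ ((k, j), σ)) : ℂ)‖₊ : ℝ≥0∞) := by
      intro j
      rw [tsum_bool, inner_W, inner_W]
      have hf : sgn ((k, j), false) = -(((eps j : ℝ) : ℂ)) := by simp [sgn]
      have ht : sgn ((k, j), true) = ((eps j : ℝ) : ℂ) := by simp [sgn]
      rw [hf, ht]
      have e1 : c (Nat.pairEquiv (k, j)) + -(((eps j : ℝ) : ℂ)) * c k
          = c (Nat.pairEquiv (k, j)) - ((eps j : ℝ) : ℂ) * c k := by ring
      rw [e1]
      refine le_trans ?_ (pl1 _ _)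
      have : ‖((eps j : ℝ) : ℂ) * c k‖₊ = eps j * ‖c k‖₊ := by
        rw [nnnorm_mul]
        congr 1
        ext
        simp [Complex.norm_real, abs_of_nonneg (eps j).coe_nonneg]
      rw [this]
      exact le_of_eq (by push_cast; ring)
    refine le_trans ?_ (ENNReal.tsum_le_tsum hterm)
    have : ∑' j, 2 * (eps j : ℝ≥0∞) * (‖c k‖₊ : ℝ≥0∞)
        = 2 * (‖c k‖₊ : ℝ≥0∞) * ∑' j, (eps j : ℝ≥0∞) := by
      rw [← ENNReal.tsum_mul_left]
      exact tsum_congr fun j => by ring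
    have hne : (2 : ℝ≥0∞) * (‖c k‖₊ : ℝ≥0∞) ≠ 0 := by
      simp only [ne_eq, mul_eq_zero, not_or]
      exact ⟨by norm_num, by simpa using hk⟩
    rw [this, tsum_eps_top, ENNReal.mul_top hne]
  calc (⊤ : ℝ≥0∞) ≤ ∑' j, ∑' σ : Bool, (‖(inner ℂ x (W b₀ ((k, j), σ)) : ℂ)‖₊ : ℝ≥0∞) := step1
    _ ≤ ∑' kj : ℕ × ℕ, ∑' σ : Bool, (‖(inner ℂ x (W b₀ (kj, σ)) : ℂ)‖₊ : ℝ≥0∞) := by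
        rw [ENNReal.tsum_prod
          (f := fun k j => ∑' σ : Bool, (‖(inner ℂ x (W b₀ ((k, j), σ)) : ℂ)‖₊ : ℝ≥0∞))]
        exact ENNReal.le_tsum k

omit [CompleteSpace H] in
lemma W_norm (b₀ : HilbertBasis ℕ ℂ H) (i : (ℕ × ℕ) × Bool) :
    (1 : ℝ) / 2 ≤ ‖W b₀ i‖ := by
  have hON := b₀.orthonormal
  have hnb : ‖b₀ (Nat.pairEquiv i.1)‖ = 1 := hON.1 _
  have h1 : ‖(inner ℂ (b₀ (Nat.pairEquiv i.1)) (W b₀ i) : ℂ)‖ ≤ ‖W b₀ i‖ := by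
    have := norm_inner_le_norm (𝕜 := ℂ) (b₀ (Nat.pairEquiv i.1)) (W b₀ i)
    rwa [hnb, one_mul] at this
  refine le_trans ?_ h1
  have hval : (inner ℂ (b₀ (Nat.pairEquiv i.1)) (W b₀ i) : ℂ)
      = 1 + sgn i * (if Nat.pairEquiv i.1 = i.1.1 then 1 else 0) := by
    rw [W, inner_add_right, inner_smul_right]
    congr 1
    · have := hON.1 (Nat.pairEquiv i.1)
      rw [@inner_self_eq_norm_sq_to_K ℂ]
      rw [this]; norm_num
    · congr 1
      rcases orthonormal_iff_ite.mp hON (Nat.pairEquiv i.1) i.1.1 with h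
      rw [h]
  rw [hval]
  by_cases hcase : Nat.pairEquiv i.1 = i.1.1
  · simp only [hcase, if_pos, if_true]
    have hs : ‖sgn i‖ ≤ 1 / 2 := by
      rw [show ‖sgn i‖ = ((‖sgn i‖₊ : ℝ)) from rfl, nnnorm_sgn]
      have := eps_le_half i.1.2
      calc ((eps i.1.2 : ℝ)) ≤ ((2⁻¹ : ℝ≥0) : ℝ) := by exact_mod_cast this
        _ = 1 / 2 := by norm_num
    have h2 : ‖(1 : ℂ)‖ - ‖sgn i * 1‖ ≤ ‖1 + sgn i * 1‖ := by
      have h3 := norm_sub_le (1 + sgn i * 1) (sgn i * 1)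
      have h4 : (1 + sgn i * 1) - sgn i * 1 = 1 := by ring
      rw [h4] at h3
      linarith
    have h5 : ‖sgn i * (1:ℂ)‖ = ‖sgn i‖ := by rw [mul_one]
    rw [h5] at h2
    simp only [norm_one] at h2
    linarith
  · simp only [hcase, if_false, mul_zero, add_zero, norm_one]
    norm_num

end Stmt9Aux
end

theorem stmt9 {H : Type*} [NormedAddCommGroup H] [InnerProductSpace ℂ H] [CompleteSpace H] (b₀ : HilbertBasis ℕ ℂ H) :
    ∃ w : ℕ → H, IsFrame w ∧ (∃ c : ℝ, 0 < c ∧ ∀ n, c ≤ ‖w n‖) ∧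
      ∀ x : H, l1Norm w x ≠ ⊤ → x = 0 := by
  classical
  refine ⟨fun m => Stmt9Aux.W b₀ (Stmt9Aux.qE.symm m), ?_, ?_, ?_⟩
  · refine ⟨2 + 2 * Stmt9Aux.S, 2 + 2 * Stmt9Aux.S, ?_, le_refl _, fun y => ?_⟩
    · have h2 : (0 : ℝ≥0) < 2 := by norm_num
      exact lt_of_lt_of_le h2 le_self_add
    · have hre : ∑' n, (‖(inner ℂ y (Stmt9Aux.W b₀ (Stmt9Aux.qE.symm n)) : ℂ)‖₊ : ℝ≥0∞) ^ 2
          = ∑' i, (‖(inner ℂ y (Stmt9Aux.W b₀ i) : ℂ)‖₊ : ℝ≥0∞) ^ 2 :=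
        Equiv.tsum_eq Stmt9Aux.qE.symm
          (fun i => (‖(inner ℂ y (Stmt9Aux.W b₀ i) : ℂ)‖₊ : ℝ≥0∞) ^ 2)
      rw [hre, Stmt9Aux.frame_sum]
      exact ⟨le_refl _, le_refl _⟩
  · exact ⟨1 / 2, by norm_num, fun n => Stmt9Aux.W_norm b₀ _⟩
  · intro x hx
    have hcoef : ∀ k, (inner ℂ x (b₀ k) : ℂ) = 0 := by
      intro k
      by_contra hk
      apply hx
      show l1Norm _ x = ⊤
      rw [l1Norm]
      have hre : ∑' n, (‖(inner ℂ x (Stmt9Aux.W b₀ (Stmt9Aux.qE.symm n)) : ℂ)‖₊ : ℝ≥0∞)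
          = ∑' i, (‖(inner ℂ x (Stmt9Aux.W b₀ i) : ℂ)‖₊ : ℝ≥0∞) :=
        Equiv.tsum_eq Stmt9Aux.qE.symm
          (fun i => (‖(inner ℂ x (Stmt9Aux.W b₀ i) : ℂ)‖₊ : ℝ≥0∞))
      rw [hre]
      exact Stmt9Aux.l1_slice b₀ x k hk
    have hrepr : b₀.repr x = 0 := by
      ext k
      have hzero : (inner ℂ (b₀ k) x : ℂ) = 0 := by
        have h2 := congrArg (starRingEnd ℂ) (hcoef k)
        simpa using h2
      simp [HilbertBasis.repr_apply_apply, hzero]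
    have h3 := congrArg b₀.repr.symm hrepr
    simpa using h3
end

section
/- Let E = {e_n} and R = {r_n} be Riesz bases for H with dual bases Ẽ = {ẽ_n} and R̃ = {r̃_n}. If there exists a Riesz basis G = {g_n} for H such that sup_k Σ_n |⟨ẽ_k, g_n⟩| < ∞ and sup_k Σ_n |⟨r̃_k, g_n⟩| < ∞, then H_E ∪ H_R ⊆ H_G. -/
open scoped ENNReal NNReal

lemma key {H : Type*} [NormedAddCommGroup H] [InnerProductSpace ℂ H] [CompleteSpace H]
    (e et g : ℕ → H)
    (hetrec : ∀ x : H, HasSum (fun n => (inner ℂ x (e n) : ℂ) • et n) x)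
    (R : ℝ≥0∞) (hR : R ≠ ⊤) (hge : ∀ k, l1Norm g (et k) ≤ R)
    (x : H) (hx : l1Norm e x ≠ ⊤) : l1Norm g x ≠ ⊤ := by
  have step : ∀ m, (‖(inner ℂ x (g m) : ℂ)‖₊ : ℝ≥0∞) ≤
      ∑' n, (‖(inner ℂ x (e n) : ℂ)‖₊ : ℝ≥0∞) * ‖(inner ℂ (et n) (g m) : ℂ)‖₊ := by
    intro m
    have h1 : HasSum (fun n => (inner ℂ (g m) ((inner ℂ x (e n) : ℂ) • et n) : ℂ))
        (inner ℂ (g m) x) := (innerSL ℂ (g m)).hasSum (hetrec x)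
    have h2 : (‖(inner ℂ (g m) x : ℂ)‖₊ : ℝ≥0∞) ≤
        ∑' n, (‖(inner ℂ (g m) ((inner ℂ x (e n) : ℂ) • et n) : ℂ)‖₊ : ℝ≥0∞) := by
      by_cases hs : Summable fun n => ‖(inner ℂ (g m) ((inner ℂ x (e n) : ℂ) • et n) : ℂ)‖₊
      · rw [← h1.tsum_eq, ← ENNReal.coe_tsum hs, ENNReal.coe_le_coe]
        exact nnnorm_tsum_le hs
      · rw [ENNReal.tsum_coe_eq_top_iff_not_summable_coe.2 ?_]
        · exact le_top
        · exact fun h => hs (NNReal.summable_coe.mp h)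
    calc (‖(inner ℂ x (g m) : ℂ)‖₊ : ℝ≥0∞) = ‖(inner ℂ (g m) x : ℂ)‖₊ := by
          simp [nnnorm, norm_inner_symm x (g m)]
      _ ≤ _ := h2
      _ = ∑' n, (‖(inner ℂ x (e n) : ℂ)‖₊ : ℝ≥0∞) * ‖(inner ℂ (et n) (g m) : ℂ)‖₊ := by
          congr 1; ext n
          rw [inner_smul_right]
          push_cast [nnnorm_mul]
          congr 1
          simp [nnnorm, norm_inner_symm (g m) (et n)]
  have : l1Norm g x ≤ R * l1Norm e x := by
    calc l1Norm g x ≤ ∑' m, ∑' n, (‖(inner ℂ x (e n) : ℂ)‖₊ : ℝ≥0∞) * ‖(inner ℂ (et n) (g m) : ℂ)‖₊ :=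
          ENNReal.tsum_le_tsum step
      _ = ∑' n, (‖(inner ℂ x (e n) : ℂ)‖₊ : ℝ≥0∞) * ∑' m, (‖(inner ℂ (et n) (g m) : ℂ)‖₊ : ℝ≥0∞) := by
          rw [ENNReal.tsum_comm]; congr 1; ext n; rw [ENNReal.tsum_mul_left]
      _ ≤ ∑' n, (‖(inner ℂ x (e n) : ℂ)‖₊ : ℝ≥0∞) * R :=
          ENNReal.tsum_le_tsum fun n => mul_le_mul_right (hge n) _
      _ = R * l1Norm e x := by rw [ENNReal.tsum_mul_right, mul_comm]; rfl
  exact fun h => absurd (h ▸ this) (by simp [ENNReal.mul_ne_top hR hx, lt_top_iff_ne_top.symm, top_le_iff])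

theorem stmt10 {H : Type*} [NormedAddCommGroup H] [InnerProductSpace ℂ H] [CompleteSpace H] (e r et rt g : ℕ → H)
    (hE : IsRieszBasis e) (hR : IsRieszBasis r) (hG : IsRieszBasis g)
    (het : ∀ m n, (inner ℂ (e m) (et n) : ℂ) = if m = n then 1 else 0)
    (hrt : ∀ m n, (inner ℂ (r m) (rt n) : ℂ) = if m = n then 1 else 0)
    (hetrec : ∀ x : H, HasSum (fun n => (inner ℂ x (e n) : ℂ) • et n) x)
    (hrtrec : ∀ x : H, HasSum (fun n => (inner ℂ x (r n) : ℂ) • rt n) x)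
    (hge : ∃ R : ℝ≥0∞, R ≠ ⊤ ∧ ∀ k, l1Norm g (et k) ≤ R)
    (hgr : ∃ R : ℝ≥0∞, R ≠ ⊤ ∧ ∀ k, l1Norm g (rt k) ≤ R) :
    HE e ∪ HE r ⊆ HE g := by
  rintro x (hx | hx)
  · obtain ⟨R, hR, hge⟩ := hge
    exact key e et g hetrec R hR hge x hx
  · obtain ⟨R, hR, hgr⟩ := hgr
    exact key r rt g hrtrec R hR hgr x hx
end

section
/- Assume that for any two Riesz bases E and R of H there is a Riesz basis G with H_E ∪ H_R ⊆ H_G. Then for every countable sequence {x_n} in H there exists a Riesz basis G such that Σ_k |⟨x_n, g_k⟩| < ∞ for every n. -/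
open scoped ENNReal NNReal

section AuxStmt11
variable {H : Type*} [NormedAddCommGroup H] [InnerProductSpace ℂ H]

lemma proj_nnnorm_sq_le (b₀ : HilbertBasis ℕ ℂ H) (y : H) (K L : ℕ)
    (F : Submodule ℂ H) (hF : F = Submodule.span ℂ (⇑b₀ '' Set.Ico K L))
    [F.HasOrthogonalProjection] :
    ‖(Submodule.orthogonalProjectionOnto F y : H)‖₊ ^ 2 ≤ ∑' j : ℕ, ‖(inner ℂ (b₀ (j + K)) y : ℂ)‖₊ ^ 2 := by
  classical
  set s : Finset ℕ := Finset.Ico K L with hs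
  have hF' : F = Submodule.span ℂ ((s.image b₀ : Finset H) : Set H) := by
    rw [hF, Finset.coe_image, Finset.coe_Ico]
  subst hF'
  haveI : FiniteDimensional ℂ (Submodule.span ℂ ((s.image b₀ : Finset H) : Set H)) :=
    FiniteDimensional.span_finset ℂ _
  set F : Submodule ℂ H := Submodule.span ℂ ((s.image b₀ : Finset H) : Set H) with hFd
  let β : OrthonormalBasis s ℂ F := OrthonormalBasis.span b₀.orthonormal s
  set P : F := Submodule.orthogonalProjectionOnto F y with hP
  have hsummable : Summable fun j : ℕ => ‖(inner ℂ (b₀ (j + K)) y : ℂ)‖₊ ^ 2 := by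
    rw [← NNReal.summable_coe]
    have := Orthonormal.inner_products_summable (𝕜 := ℂ) y
      (b₀.orthonormal.comp (· + K) (add_left_injective K))
    simpa using this
  have hrepr : ∀ j : s, β.repr P j = inner ℂ (b₀ (j : ℕ)) y := by
    intro j
    rw [OrthonormalBasis.repr_apply_apply]
    have h : (β j : H) = b₀ (j : ℕ) := OrthonormalBasis.span_apply b₀.orthonormal s j
    rw [hP, Submodule.inner_orthogonalProjectionOnto_eq_of_mem_left, h]
  have h1 : ‖(P : H)‖₊ ^ 2 = ∑ j : s, ‖(inner ℂ (b₀ (j : ℕ)) y : ℂ)‖₊ ^ 2 := by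
    have hn : ‖(P : H)‖₊ = ‖P‖₊ := rfl
    rw [hn, ← β.repr.nnnorm_map P, EuclideanSpace.nnnorm_eq, NNReal.sq_sqrt]
    exact Finset.sum_congr rfl fun j _ => by rw [hrepr j]
  calc ‖(P : H)‖₊ ^ 2 = ∑ j : s, ‖(inner ℂ (b₀ (j : ℕ)) y : ℂ)‖₊ ^ 2 := h1
    _ = ∑ j ∈ s, ‖(inner ℂ (b₀ j) y : ℂ)‖₊ ^ 2 := Finset.sum_coe_sort s (fun j => ‖(inner ℂ (b₀ j) y : ℂ)‖₊ ^ 2)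
    _ = ∑ k ∈ Finset.range (L - K), ‖(inner ℂ (b₀ (K + k)) y : ℂ)‖₊ ^ 2 := by
        rw [hs]; exact Finset.sum_Ico_eq_sum_range _ K L
    _ = ∑ k ∈ Finset.range (L - K), ‖(inner ℂ (b₀ (k + K)) y : ℂ)‖₊ ^ 2 :=
        Finset.sum_congr rfl fun k _ => by rw [add_comm]
    _ ≤ _ := Summable.sum_le_tsum _ (fun i _ => zero_le) hsummable

variable {H : Type*} [NormedAddCommGroup H] [InnerProductSpace ℂ H]

lemma span_coe_onb {ι : Type*} [Fintype ι] (K : Submodule ℂ H) (β : OrthonormalBasis ι ℂ K) :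
    Submodule.span ℂ (Set.range fun i => (β i : H)) = K := by
  have h1 : (fun i => (β i : H)) = (K.subtype : K →ₗ[ℂ] H) ∘ ⇑β := rfl
  have h2 : Submodule.span ℂ (Set.range ⇑β) = ⊤ := by
    rw [← β.coe_toBasis]; exact β.toBasis.span_eq
  rw [h1, Set.range_comp, ← Submodule.map_span, h2, Submodule.map_top, Submodule.range_subtype]

lemma adapted_family (F W : Submodule ℂ H) [FiniteDimensional ℂ F] (hWF : W ≤ F) :
    ∃ (a b : ℕ) (γ : Fin a ⊕ Fin b → H),
      Orthonormal ℂ γ ∧ Submodule.span ℂ (Set.range γ) = F ∧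
      a = Module.finrank ℂ W ∧ (∀ i : Fin b, γ (Sum.inr i) ∈ Wᗮ) := by
  classical
  haveI : FiniteDimensional ℂ W := Submodule.finiteDimensional_of_le hWF
  set V : Submodule ℂ H := Wᗮ ⊓ F with hV
  haveI : FiniteDimensional ℂ V := Submodule.finiteDimensional_of_le (inf_le_right : V ≤ F)
  let βW := stdOrthonormalBasis ℂ W
  let βV := stdOrthonormalBasis ℂ V
  refine ⟨_, _, Sum.elim (fun i => (βW i : H)) (fun i => (βV i : H)), ?_, ?_, rfl, ?_⟩
  · rw [orthonormal_iff_ite]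
    rintro (i | i) (j | j)
    · simp only [Sum.elim_inl]
      rw [← Submodule.coe_inner, orthonormal_iff_ite.mp βW.orthonormal i j]
      simp
    · simp only [Sum.elim_inl, Sum.elim_inr]
      rw [Submodule.inner_right_of_mem_orthogonal (βW i).2
        ((inf_le_left : V ≤ Wᗮ) (βV j).2)]
      simp
    · simp only [Sum.elim_inl, Sum.elim_inr]
      rw [Submodule.inner_left_of_mem_orthogonal (βW j).2
        ((inf_le_left : V ≤ Wᗮ) (βV i).2)]
      simp
    · simp only [Sum.elim_inr]
      rw [← Submodule.coe_inner, orthonormal_iff_ite.mp βV.orthonormal i j]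
      simp
  · rw [Set.Sum.elim_range, Submodule.span_union, span_coe_onb W βW, span_coe_onb V βV]
    exact Submodule.sup_orthogonal_inf_of_hasOrthogonalProjection hWF
  · exact fun i => (inf_le_left : V ≤ Wᗮ) (βV i).2

variable {H : Type*} [NormedAddCommGroup H] [InnerProductSpace ℂ H]

lemma block_sum_le (y : H) (F W : Submodule ℂ H) [F.HasOrthogonalProjection]
    (c : ℝ≥0) (hPc : ‖(Submodule.orthogonalProjectionOnto F y : H)‖₊ ≤ c)
    (hPW : ((Submodule.orthogonalProjectionOnto F y : H)) ∈ W)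
    {a b : ℕ} (γ : Fin a ⊕ Fin b → H) (hONγ : Orthonormal ℂ γ)
    (hmem : ∀ i, γ i ∈ F) (hperp : ∀ i : Fin b, γ (Sum.inr i) ∈ Wᗮ) :
    (∑' i : Fin a ⊕ Fin b, (‖(inner ℂ y (γ i) : ℂ)‖₊ : ℝ≥0∞)) ≤ (a : ℝ≥0∞) * (c : ℝ≥0∞) := by
  have hproj : ∀ w ∈ F, (inner ℂ y w : ℂ) = inner ℂ ((Submodule.orthogonalProjectionOnto F y : H)) w := by
    intro w hw
    have h4 : (inner ℂ (y - (Submodule.orthogonalProjectionOnto F y : H)) w : ℂ) = 0 :=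
      Submodule.inner_left_of_mem_orthogonal hw (Submodule.sub_starProjection_mem_orthogonal _)
    rw [inner_sub_left, sub_eq_zero] at h4
    exact h4
  rw [tsum_fintype, Fintype.sum_sum_type]
  have hz : ∀ i : Fin b, (‖(inner ℂ y (γ (Sum.inr i)) : ℂ)‖₊ : ℝ≥0∞) = 0 := by
    intro i
    rw [hproj _ (hmem _), Submodule.inner_right_of_mem_orthogonal hPW (hperp i)]
    simp
  have hb1 : ∀ i : Fin a, (‖(inner ℂ y (γ (Sum.inl i)) : ℂ)‖₊ : ℝ≥0∞) ≤ (c : ℝ≥0∞) := by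
    intro i
    rw [hproj _ (hmem _)]
    refine ENNReal.coe_le_coe.2 ?_
    have h5 : ‖γ (Sum.inl i)‖₊ = 1 := by
      ext
      rw [coe_nnnorm, hONγ.1 (Sum.inl i), NNReal.coe_one]
    calc ‖(inner ℂ ((Submodule.orthogonalProjectionOnto F y : H)) (γ (Sum.inl i)) : ℂ)‖₊
        ≤ ‖(Submodule.orthogonalProjectionOnto F y : H)‖₊ * ‖γ (Sum.inl i)‖₊ := nnnorm_inner_le_nnnorm _ _
      _ = ‖(Submodule.orthogonalProjectionOnto F y : H)‖₊ := by rw [h5, mul_one]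
      _ ≤ c := hPc
  calc (∑ i : Fin a, (‖(inner ℂ y (γ (Sum.inl i)) : ℂ)‖₊ : ℝ≥0∞))
        + ∑ i : Fin b, (‖(inner ℂ y (γ (Sum.inr i)) : ℂ)‖₊ : ℝ≥0∞)
      ≤ (∑ _i : Fin a, (c : ℝ≥0∞)) + 0 := by
        refine add_le_add (Finset.sum_le_sum fun i _ => hb1 i) ?_
        simp [hz]
    _ = (a : ℝ≥0∞) * (c : ℝ≥0∞) := by
        rw [add_zero, Finset.sum_const, Finset.card_univ, Fintype.card_fin, nsmul_eq_mul]

end AuxStmt11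

set_option maxHeartbeats 2000000 in
theorem stmt11 {H : Type*} [NormedAddCommGroup H] [InnerProductSpace ℂ H] [CompleteSpace H] (b₀ : HilbertBasis ℕ ℂ H)
    (hyp : ∀ e r : ℕ → H, IsRieszBasis e → IsRieszBasis r →
      ∃ g : ℕ → H, IsRieszBasis g ∧ HE e ∪ HE r ⊆ HE g)
    (x : ℕ → H) :
    ∃ g : ℕ → H, IsRieszBasis g ∧ ∀ n, l1Norm g (x n) ≠ ⊤ := by
  classical
  -- squared coefficients and tails
  set q : ℕ → ℕ → ℝ≥0 := fun n j => ‖(inner ℂ (b₀ j) (x n) : ℂ)‖₊ ^ 2 with hq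
  set r : ℕ → ℕ → ℝ≥0 := fun n K => ∑' j, q n (j + K) with hr
  have key : ∀ m L : ℕ, ∃ K, L < K ∧ ∀ n ≤ m, r n K ≤ ((2 : ℝ≥0)⁻¹ ^ (m + 1)) ^ 2 := by
    intro m L
    have hpos : (0 : ℝ≥0) < ((2 : ℝ≥0)⁻¹ ^ (m + 1)) ^ 2 := by positivity
    have hev : ∀ᶠ K in Filter.atTop, ∀ n ∈ Finset.range (m + 1),
        r n K ≤ ((2 : ℝ≥0)⁻¹ ^ (m + 1)) ^ 2 :=
      (Finset.range (m + 1)).eventually_all.2 fun n _ =>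
        ((NNReal.tendsto_sum_nat_add (q n)).eventually_lt_const hpos).mono fun K h => h.le
    obtain ⟨K, hK1, hK2⟩ := ((Filter.eventually_gt_atTop L).and hev).exists
    exact ⟨K, hK1, fun n hn => hK2 n (Finset.mem_range.mpr (Nat.lt_succ_of_le hn))⟩
  let N : ℕ → ℕ := fun m => Nat.rec 0 (fun m' ih => (key m' ih).choose) m
  have hN0 : N 0 = 0 := rfl
  have hNlt : ∀ m, N m < N (m + 1) := fun m => (key m (N m)).choose_spec.1
  have hNtail : ∀ m n, n ≤ m → r n (N (m + 1)) ≤ ((2 : ℝ≥0)⁻¹ ^ (m + 1)) ^ 2 :=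
    fun m n h => (key m (N m)).choose_spec.2 n h
  have hNmono : StrictMono N := strictMono_nat_of_lt_succ hNlt
  have hcov : ∀ j, ∃ m, N m ≤ j ∧ j < N (m + 1) := by
    intro j
    induction j with
    | zero => exact ⟨0, le_of_eq hN0, hN0 ▸ hNlt 0⟩
    | succ j ih =>
      obtain ⟨m, h1, h2⟩ := ih
      rcases lt_or_ge (j + 1) (N (m + 1)) with h | h
      · exact ⟨m, le_trans h1 (Nat.le_succ j), h⟩
      · have he : N (m + 1) ≤ j + 1 := h
        exact ⟨m + 1, he, lt_of_le_of_lt (le_antisymm he h2 ▸ le_refl (j+1)) (hNlt (m+1))⟩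
  -- blocks
  set F : ℕ → Submodule ℂ H :=
    fun m => Submodule.span ℂ (((Finset.Ico (N m) (N (m + 1))).image b₀ : Finset H) : Set H)
    with hF
  have hFeq : ∀ m, F m = Submodule.span ℂ (⇑b₀ '' Set.Ico (N m) (N (m + 1))) := by
    intro m; simp only [hF]; rw [Finset.coe_image, Finset.coe_Ico]
  have hbmem : ∀ {j m}, N m ≤ j → j < N (m + 1) → b₀ j ∈ F m := by
    intro j m h1 h2
    rw [hFeq m]
    exact Submodule.subset_span ⟨j, ⟨h1, h2⟩, rfl⟩
  set W : ℕ → Submodule ℂ H := fun m => Submodule.span ℂ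
    (Set.range fun k : Fin (m + 1) => ((Submodule.orthogonalProjectionOnto (F m) (x k) : H))) with hW
  have hWF : ∀ m, W m ≤ F m := by
    intro m
    rw [hW, Submodule.span_le]
    rintro _ ⟨k, rfl⟩
    exact (Submodule.orthogonalProjectionOnto (F m) (x k)).2
  obtain ⟨a, b, γ, hON, hspan, ha, hperp⟩ :
      ∃ (a b : ℕ → ℕ) (γ : ∀ m, Fin (a m) ⊕ Fin (b m) → H),
        (∀ m, Orthonormal ℂ (γ m)) ∧ (∀ m, Submodule.span ℂ (Set.range (γ m)) = F m) ∧
        (∀ m, a m = Module.finrank ℂ (W m)) ∧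
        (∀ m (i : Fin (b m)), γ m (Sum.inr i) ∈ (W m)ᗮ) := by
    choose a b γ h1 h2 h3 h4 using fun m => adapted_family (F m) (W m) (hWF m)
    exact ⟨a, b, γ, h1, h2, h3, h4⟩
  have hWrank : ∀ m, a m ≤ m + 1 := by
    intro m
    rw [ha m, hW]
    refine (finrank_span_le_card _).trans ?_
    rw [Set.toFinset_range]
    exact Finset.card_image_le.trans (by simp)
  have hmemF : ∀ m i, γ m i ∈ F m := fun m i =>
    hspan m ▸ Submodule.subset_span (Set.mem_range_self i)
  -- orthogonality across blocks
  have hFortho : ∀ {m m'}, m ≠ m' → (F m) ⟂ (F m') := by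
    intro m m' hmm
    rw [hFeq m, hFeq m', Submodule.isOrtho_span]
    rintro _ ⟨j, hj, rfl⟩ _ ⟨j', hj', rfl⟩
    have : j ≠ j' := by
      rcases hmm.lt_or_gt with h | h
      · exact Nat.ne_of_lt (lt_of_lt_of_le hj.2 (le_trans (hNmono.le_iff_le.2 h) hj'.1))
      · exact (Nat.ne_of_lt (lt_of_lt_of_le hj'.2 (le_trans (hNmono.le_iff_le.2 h) hj.1))).symm
    exact b₀.orthonormal.2 this
  -- the global family
  set v : (Σ m, Fin (a m) ⊕ Fin (b m)) → H := fun p => γ p.1 p.2 with hv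
  have hvON : Orthonormal ℂ v := by
    rw [orthonormal_iff_ite]
    rintro ⟨m, i⟩ ⟨m', j⟩
    by_cases hmm : m = m'
    · subst hmm
      have := orthonormal_iff_ite.mp (hON m) i j
      rw [hv] at *
      simp only at this ⊢
      rw [this]
      by_cases hij : i = j
      · simp [hij]
      · simp [hij, Sigma.mk.inj_iff]
    · rw [(hFortho hmm).inner_eq (hmemF m i) (hmemF m' j)]
      simp [Sigma.mk.inj_iff, hmm]
  have hne : ∀ m, Nonempty (Fin (a m) ⊕ Fin (b m)) := by
    intro m
    by_contra h
    rw [not_nonempty_iff] at h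
    have hbot : F m = ⊥ := by rw [← hspan m, Set.range_eq_empty, Submodule.span_empty]
    have hbm : b₀ (N m) ∈ F m := hbmem (le_refl _) (hNlt m)
    rw [hbot, Submodule.mem_bot] at hbm
    exact b₀.orthonormal.ne_zero (N m) hbm
  haveI : Infinite (Σ m, Fin (a m) ⊕ Fin (b m)) :=
    Infinite.of_injective (fun m => ⟨m, (hne m).some⟩) fun m m' h => congrArg Sigma.fst h
  obtain ⟨d⟩ := nonempty_denumerable (Σ m, Fin (a m) ⊕ Fin (b m))
  let e : (Σ m, Fin (a m) ⊕ Fin (b m)) ≃ ℕ := @Denumerable.eqv _ d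
  let g : ℕ → H := fun k => v (e.symm k)
  have hgON : Orthonormal ℂ g := hvON.comp e.symm e.symm.injective
  have hsp : ⊤ ≤ (Submodule.span ℂ (Set.range g)).topologicalClosure := by
    have hrange : Set.range g = Set.range v := e.symm.surjective.range_comp v
    rw [hrange]
    calc (⊤ : Submodule ℂ H)
        = (Submodule.span ℂ (Set.range ⇑b₀)).topologicalClosure := b₀.dense_span.symm
      _ ≤ _ := by
          apply Submodule.topologicalClosure_mono
          rw [Submodule.span_le]
          rintro _ ⟨j, rfl⟩
          obtain ⟨m, hm1, hm2⟩ := hcov j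
          have hmem : b₀ j ∈ F m := hbmem hm1 hm2
          rw [← hspan m] at hmem
          have hsub : Set.range (γ m) ⊆ Set.range v := by
            rintro _ ⟨i, rfl⟩
            exact ⟨⟨m, i⟩, rfl⟩
          exact Submodule.span_mono hsub hmem
  let B : HilbertBasis ℕ ℂ H := HilbertBasis.mk hgON hsp
  refine ⟨g, ⟨B, ContinuousLinearEquiv.refl ℂ H, fun k => by
    simp only [ContinuousLinearEquiv.coe_refl', id_eq]
    exact (congrFun (HilbertBasis.coe_mk hgON hsp) k).symm⟩, ?_⟩
  -- the summability estimate
  intro n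
  have hsig : l1Norm g (x n)
      = ∑' m : ℕ, ∑' i : Fin (a m) ⊕ Fin (b m), (‖(inner ℂ (x n) (γ m i) : ℂ)‖₊ : ℝ≥0∞) :=
    (Equiv.tsum_eq e.symm fun p => (‖(inner ℂ (x n) (v p) : ℂ)‖₊ : ℝ≥0∞)).trans
      (ENNReal.tsum_sigma' _)
  rw [hsig]
  set wB : ℕ → ℝ≥0 := fun m => (m + 1) * 2⁻¹ ^ m with hwB
  have hfin : ∀ m, (∑' i : Fin (a m) ⊕ Fin (b m), (‖(inner ℂ (x n) (γ m i) : ℂ)‖₊ : ℝ≥0∞)) ≠ ⊤ := by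
    intro m
    rw [tsum_fintype]
    exact (ENNReal.sum_lt_top.2 fun i _ => ENNReal.coe_lt_top).ne
  have hblock : ∀ m, n < m →
      (∑' i : Fin (a m) ⊕ Fin (b m), (‖(inner ℂ (x n) (γ m i) : ℂ)‖₊ : ℝ≥0∞)) ≤ (wB m : ℝ≥0∞) := by
    intro m hm
    obtain ⟨m', rfl⟩ : ∃ m', m = m' + 1 :=
      ⟨m - 1, (Nat.succ_pred_eq_of_pos (by omega)).symm⟩
    have hn' : n ≤ m' := Nat.lt_succ_iff.mp hm
    have hP : ‖(Submodule.orthogonalProjectionOnto (F (m' + 1)) (x n) : H)‖₊ ≤ (2 : ℝ≥0)⁻¹ ^ (m' + 1) := by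
      have h1 := proj_nnnorm_sq_le b₀ (x n) (N (m' + 1)) (N (m' + 2)) (F (m' + 1))
        (hFeq (m' + 1))
      have h2 : (∑' j : ℕ, ‖(inner ℂ (b₀ (j + N (m' + 1))) (x n) : ℂ)‖₊ ^ 2)
          = r n (N (m' + 1)) := rfl
      have h3 := (h1.trans (le_of_eq h2)).trans (hNtail m' n hn')
      calc ‖(Submodule.orthogonalProjectionOnto (F (m' + 1)) (x n) : H)‖₊
          = NNReal.sqrt (‖(Submodule.orthogonalProjectionOnto (F (m' + 1)) (x n) : H)‖₊ ^ 2) :=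
            (NNReal.sqrt_sq _).symm
        _ ≤ NNReal.sqrt (((2 : ℝ≥0)⁻¹ ^ (m' + 1)) ^ 2) := NNReal.sqrt_le_sqrt.2 h3
        _ = (2 : ℝ≥0)⁻¹ ^ (m' + 1) := NNReal.sqrt_sq _
    have hPxW : ((Submodule.orthogonalProjectionOnto (F (m' + 1)) (x n) : H)) ∈ W (m' + 1) := by
      rw [hW]
      exact Submodule.subset_span ⟨⟨n, by omega⟩, rfl⟩
    have hle := block_sum_le (x n) (F (m' + 1)) (W (m' + 1)) _ hP hPxW (γ (m' + 1))
      (hON _) (hmemF _) (hperp _)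
    refine hle.trans ?_
    rw [← ENNReal.coe_natCast, ← ENNReal.coe_mul, ENNReal.coe_le_coe]
    simp only [hwB]
    refine mul_le_mul' ?_ le_rfl
    exact_mod_cast hWrank (m' + 1)
  set S : ℕ → ℝ≥0∞ :=
    fun m => ∑' i : Fin (a m) ⊕ Fin (b m), (‖(inner ℂ (x n) (γ m i) : ℂ)‖₊ : ℝ≥0∞) with hS
  have hpt : ∀ m, S m ≤ (if m ≤ n then S m else 0) + (wB m : ℝ≥0∞) := by
    intro m
    by_cases h : m ≤ n
    · simp only [if_pos h]
      exact le_self_add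
    · simp only [if_neg h, zero_add]
      exact hblock m (not_le.mp h)
  have hreal : Summable (fun m : ℕ => ((m : ℝ) + 1) * (2⁻¹ : ℝ) ^ m) := by
    have h1 := summable_pow_mul_geometric_of_norm_lt_one (R := ℝ) 1
      (r := (2 : ℝ)⁻¹) (by rw [norm_inv]; norm_num)
    have h2 : Summable (fun m : ℕ => ((2 : ℝ)⁻¹) ^ m) :=
      summable_geometric_of_lt_one (by norm_num) (by norm_num)
    exact (h1.add h2).congr fun m => by push_cast; ring
  have hsw : Summable wB := by
    rw [← NNReal.summable_coe]
    refine hreal.congr fun m => ?_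
    simp only [hwB]
    push_cast
    ring
  have h1 : (∑' m, (if m ≤ n then S m else 0)) ≠ ⊤ := by
    rw [tsum_eq_sum (s := Finset.range (n + 1))
      (fun m hm => if_neg (by simp only [Finset.mem_range] at hm; omega))]
    refine (ENNReal.sum_lt_top.2 fun m _ => ?_).ne
    split_ifs with h
    · exact (hfin m).lt_top
    · simp
  have h2 : (∑' m, (wB m : ℝ≥0∞)) ≠ ⊤ := ENNReal.tsum_coe_ne_top_iff_summable.2 hsw
  refine ne_top_of_le_ne_top (ENNReal.add_ne_top.2 ⟨h1, h2⟩) ?_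
  calc ∑' m, S m ≤ ∑' m, ((if m ≤ n then S m else 0) + (wB m : ℝ≥0∞)) :=
        ENNReal.tsum_le_tsum hpt
    _ = (∑' m, (if m ≤ n then S m else 0)) + ∑' m, (wB m : ℝ≥0∞) := ENNReal.tsum_add
end

section
/- If M ⊆ H is contained in a finite-dimensional subspace of H, then M is ℓ¹-bounded if and only if M is bounded in the norm of H. -/
open scoped ENNReal NNReal

set_option linter.unusedSectionVars false

lemma fwd {H : Type*} [NormedAddCommGroup H] [InnerProductSpace ℂ H] [CompleteSpace H] [InnerProductSpace ℂ H] [CompleteSpace H]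
    (b : HilbertBasis ℕ ℂ H) (T : H ≃L[ℂ] H) (e : ℕ → H) (hT : ∀ n, e n = T (b n))
    (R : ℝ≥0∞) (hR : R ≠ ⊤) (x : H) (hx : l1Norm e x ≤ R) :
    ‖x‖ ≤ ‖(ContinuousLinearMap.adjoint (T.symm : H →L[ℂ] H))‖ * R.toReal := by
  set A : H →L[ℂ] H := (T : H →L[ℂ] H)
  set B : H →L[ℂ] H := (T.symm : H →L[ℂ] H)
  set y := ContinuousLinearMap.adjoint A x with hy
  have key : ∀ n, (inner ℂ x (e n) : ℂ) = inner ℂ y (b n) := by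
    intro n
    rw [hT, hy, ContinuousLinearMap.adjoint_inner_left]; rfl
  -- summability
  have hne : (∑' n, (‖(inner ℂ x (e n) : ℂ)‖₊ : ℝ≥0∞)) ≠ ⊤ := (lt_of_le_of_lt hx hR.lt_top).ne
  have hsum : Summable fun n => ‖(inner ℂ x (e n) : ℂ)‖₊ :=
    ENNReal.tsum_coe_ne_top_iff_summable.mp hne
  have hsum' : Summable fun n => ‖(inner ℂ x (e n) : ℂ)‖ := by
    simpa [← coe_nnnorm, NNReal.summable_coe] using hsum
  -- real sum bound
  have hreal : (∑' n, ‖(inner ℂ x (e n) : ℂ)‖) ≤ R.toReal := by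
    have h1 : (∑' n, (‖(inner ℂ x (e n) : ℂ)‖₊ : ℝ≥0∞)).toReal ≤ R.toReal :=
      ENNReal.toReal_mono hR hx
    rwa [ENNReal.tsum_toReal_eq (fun n => ENNReal.coe_ne_top)] at h1
  -- norm y bound
  have hyB : ‖y‖ ≤ R.toReal := by
    have hrepr := b.hasSum_repr y
    have hterm : ∀ n, ‖b.repr y n • b n‖ = ‖(inner ℂ x (e n) : ℂ)‖ := by
      intro n
      rw [norm_smul, b.repr_apply_apply, b.orthonormal.1 n, mul_one, key n,
        norm_inner_symm]
    calc ‖y‖ = ‖∑' n, b.repr y n • b n‖ := by rw [hrepr.tsum_eq]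
      _ ≤ ∑' n, ‖b.repr y n • b n‖ := norm_tsum_le_tsum_norm (by simpa [hterm] using hsum')
      _ = ∑' n, ‖(inner ℂ x (e n) : ℂ)‖ := by simp [hterm]
      _ ≤ R.toReal := hreal
  have hxy : ContinuousLinearMap.adjoint B y = x := by
    apply ext_inner_right ℂ
    intro z
    rw [ContinuousLinearMap.adjoint_inner_left, hy, ContinuousLinearMap.adjoint_inner_left]
    simp [A, B]
  calc ‖x‖ = ‖ContinuousLinearMap.adjoint B y‖ := by rw [hxy]
    _ ≤ ‖ContinuousLinearMap.adjoint B‖ * ‖y‖ := (ContinuousLinearMap.adjoint B).le_opNorm y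
    _ ≤ ‖ContinuousLinearMap.adjoint B‖ * R.toReal := by
        exact mul_le_mul_of_nonneg_left hyB (norm_nonneg _)

section
variable {H : Type*} [NormedAddCommGroup H] [InnerProductSpace ℂ H] [CompleteSpace H]
variable {H : Type*} [NormedAddCommGroup H] [InnerProductSpace ℂ H] [CompleteSpace H]

-- Step A : separability
lemma sepH (b₀ : HilbertBasis ℕ ℂ H) : TopologicalSpace.SeparableSpace H := by
  have h1 : TopologicalSpace.IsSeparable (Set.range ⇑b₀) := (Set.countable_range _).isSeparable
  have h3 := (h1.span (R := ℂ)).closure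
  have h4 : closure ((Submodule.span ℂ (Set.range ⇑b₀)) : Set H) = Set.univ := by
    rw [← Submodule.topologicalClosure_coe, b₀.dense_span, Submodule.top_coe]
  rw [h4] at h3
  exact TopologicalSpace.isSeparable_univ_iff.mp h3

-- Step B : orthonormal sets are countable
lemma countable_of_orthonormal [TopologicalSpace.SeparableSpace H] {w : Set H}
    (hw : Orthonormal ℂ ((↑) : w → H)) : w.Countable := by
  apply Set.PairwiseDisjoint.countable_of_isOpen (s := fun z : H => Metric.ball z (1/2))
  · intro z hz z' hz' hne
    apply Metric.ball_disjoint_ball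
    have horth : (inner ℂ z z' : ℂ) = 0 := by
      have := hw.2 (i := ⟨z, hz⟩) (j := ⟨z', hz'⟩) (by simpa using hne)
      simpa using this
    have hz1 : ‖z‖ = 1 := by simpa using hw.1 ⟨z, hz⟩
    have hz'1 : ‖z'‖ = 1 := by simpa using hw.1 ⟨z', hz'⟩
    have hsq : ‖z - z'‖ ^ 2 = 2 := by
      rw [@norm_sub_sq ℂ]
      simp only [hz1, hz'1, horth]
      norm_num
    rw [dist_eq_norm]
    nlinarith [norm_nonneg (z - z')]
  · intro z _; exact Metric.isOpen_ball
  · intro z _; exact ⟨z, Metric.mem_ball_self (by norm_num)⟩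

-- Step C : infinite
lemma infinite_of_dense_span (b₀ : HilbertBasis ℕ ℂ H) {w : Set H}
    (hd : (Submodule.span ℂ w).topologicalClosure = ⊤) : w.Infinite := by
  intro hfin
  have hFD : FiniteDimensional ℂ (Submodule.span ℂ w) := FiniteDimensional.span_of_finite ℂ hfin
  have hclosed : IsClosed ((Submodule.span ℂ w : Submodule ℂ H) : Set H) :=
    Submodule.closed_of_finiteDimensional _
  have htop : Submodule.span ℂ w = ⊤ := by
    rw [← hd, hclosed.submodule_topologicalClosure_eq]
  rw [htop] at hFD
  have : FiniteDimensional ℂ H := Module.Finite.equiv (Submodule.topEquiv (R := ℂ) (M := H))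
  have hli := b₀.orthonormal.linearIndependent
  have := hli.lt_aleph0_of_finiteDimensional
  simp [Cardinal.mk_nat] at this


theorem bwd (b₀ : HilbertBasis ℕ ℂ H) (M : Set H)
    (S : Submodule ℂ H) (hS : FiniteDimensional ℂ S) (hMS : M ⊆ (S : Set H))
    (hM : Bornology.IsBounded M) : L1Bounded M := by
  obtain ⟨C, hC⟩ := isBounded_iff_forall_norm_le.mp hM
  set d := Module.finrank ℂ S with hd
  set ob := stdOrthonormalBasis ℂ S with hob
  set v : Fin d → H := fun i => ((ob i : S) : H) with hv
  have hvon : Orthonormal ℂ v := by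
    rw [orthonormal_iff_ite]
    intro i j
    have h := orthonormal_iff_ite.mp ob.orthonormal i j
    simpa [v, Submodule.coe_inner] using h
  set s : Set H := Set.range v with hs
  have hson : Orthonormal ℂ ((↑) : s → H) := hvon.toSubtypeRange
  obtain ⟨w, b, hsw, hb⟩ := hson.exists_hilbertBasis_extension
  have hwon : Orthonormal ℂ ((↑) : w → H) := by rw [← hb]; exact b.orthonormal
  haveI := sepH b₀
  have hwc : w.Countable := countable_of_orthonormal hwon
  have hdense : (Submodule.span ℂ w).topologicalClosure = ⊤ := by
    have h := b.dense_span; rwa [hb, Subtype.range_coe] at h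
  have hwi : w.Infinite := infinite_of_dense_span b₀ hdense
  haveI := hwc.to_subtype
  haveI := hwi.to_subtype
  obtain ⟨dn⟩ : Nonempty (Denumerable w) := nonempty_denumerable _
  let eqv : ℕ ≃ w := (dn.eqv w).symm
  set e : ℕ → H := fun n => ((eqv n : w) : H) with he
  have heon : Orthonormal ℂ e := hwon.comp eqv eqv.injective
  have hrange : Set.range e = w := by
    ext z
    constructor
    · rintro ⟨n, rfl⟩; exact (eqv n).2
    · intro hz; exact ⟨eqv.symm ⟨z, hz⟩, by simp [e]⟩
  have hesp : ⊤ ≤ (Submodule.span ℂ (Set.range e)).topologicalClosure := by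
    rw [hrange, hdense]
  let B := HilbertBasis.mk heon hesp
  have heinj : Function.Injective e :=
    Subtype.val_injective.comp eqv.injective
  have hsfin : s.Finite := Set.finite_range v
  have hFfin : (e ⁻¹' s).Finite := hsfin.preimage heinj.injOn
  set F := hFfin.toFinset with hF
  refine ⟨e, ⟨B, ContinuousLinearEquiv.refl ℂ H, fun n => by
      exact (congrFun (HilbertBasis.coe_mk heon hesp) n).symm⟩,
    (F.card : ℝ≥0∞) * (C.toNNReal : ℝ≥0∞), by simp [ENNReal.mul_ne_top], ?_⟩
  intro x hx
  have hxS : x ∈ S := hMS hx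
  have hspan : Submodule.span ℂ s = S := by
    have h1 : s = (S.subtype) '' Set.range (⇑ob) := by
      rw [hs, hv, ← Set.range_comp]
      rfl
    rw [h1, ← Submodule.map_span]
    rw [← ob.coe_toBasis, ob.toBasis.span_eq]
    simp [Submodule.map_top, Submodule.range_subtype]
  have hzero : ∀ n ∉ F, (‖(inner ℂ x (e n) : ℂ)‖₊ : ℝ≥0∞) = 0 := by
    intro n hn
    have hnz : e n ∉ s := by simpa [hF] using hn
    have hperp : ∀ u ∈ s, (inner ℂ u (e n) : ℂ) = 0 := by
      intro u hu
      have hu' : u ∈ w := hsw hu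
      have hne : (⟨u, hu'⟩ : w) ≠ eqv n := by
        intro hcon
        apply hnz
        show ((eqv n : w) : H) ∈ s
        rw [← congrArg Subtype.val hcon]
        exact hu
      simpa using hwon.2 hne
    have hort : Submodule.span ℂ s ⟂ Submodule.span ℂ {e n} := by
      rw [Submodule.isOrtho_span]
      intro u hu z hz
      rw [Set.mem_singleton_iff] at hz
      rw [hz]
      exact hperp u hu
    have hx' : x ∈ (Submodule.span ℂ {e n})ᗮ := hort (hspan ▸ hxS)
    have : (inner ℂ x (e n) : ℂ) = 0 :=
      Submodule.mem_orthogonal_singleton_iff_inner_left.mp hx'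
    simp [this]
  have hbound : ∀ n ∈ F, (‖(inner ℂ x (e n) : ℂ)‖₊ : ℝ≥0∞) ≤ (C.toNNReal : ℝ≥0∞) := by
    intro n hn
    have h1 : ‖(inner ℂ x (e n) : ℂ)‖ ≤ ‖x‖ * ‖e n‖ := norm_inner_le_norm x (e n)
    have h2 : ‖e n‖ = 1 := heon.1 n
    have h3 : ‖(inner ℂ x (e n) : ℂ)‖ ≤ C := by
      rw [h2, mul_one] at h1
      exact h1.trans (hC x hx)
    rw [ENNReal.coe_le_coe, ← NNReal.coe_le_coe, coe_nnnorm, Real.coe_toNNReal']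
    exact h3.trans (le_max_left _ _)
  calc l1Norm e x = ∑ n ∈ F, (‖(inner ℂ x (e n) : ℂ)‖₊ : ℝ≥0∞) := tsum_eq_sum hzero
    _ ≤ ∑ _n ∈ F, (C.toNNReal : ℝ≥0∞) := Finset.sum_le_sum hbound
    _ = (F.card : ℝ≥0∞) * (C.toNNReal : ℝ≥0∞) := by
        rw [Finset.sum_const, nsmul_eq_mul]

end

theorem stmt13 {H : Type*} [NormedAddCommGroup H] [InnerProductSpace ℂ H] [CompleteSpace H] (b₀ : HilbertBasis ℕ ℂ H) (M : Set H)
    (S : Submodule ℂ H) (hS : FiniteDimensional ℂ S) (hMS : M ⊆ (S : Set H)) :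
    L1Bounded M ↔ Bornology.IsBounded M := by
  constructor
  · rintro ⟨e, ⟨b, T, hT⟩, R, hR, hRM⟩
    rw [isBounded_iff_forall_norm_le]
    exact ⟨‖ContinuousLinearMap.adjoint (T.symm : H →L[ℂ] H)‖ * R.toReal,
      fun x hx => fwd b T e hT R hR x (hRM x hx)⟩
  · exact bwd b₀ M S hS hMS
end

section
/- If F = {x_n} is a frame for a separable infinite-dimensional Hilbert space H, then H_F = {x ∈ H : Σ_n |⟨x, x_n⟩| < ∞} is a proper subset of H. -/
open scoped ENNReal NNReal

open Filter in
private lemma frame_l1_aux (α : ℝ) (hα : 0 < α) (ε : ℕ → ℝ)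
    (hε0 : ∀ k, 0 ≤ ε k) (hε1 : ∀ k, ε k ≤ α/4) (hε2 : ∀ k, ε k ≤ (1/2)^k)
    (v : ℕ → ℕ → ℝ) (hv0 : ∀ k n, 0 ≤ v k n) (hsumv : ∀ k, Summable (v k))
    (htot : ∀ k, α ≤ ∑' n, v k n)
    (P : ℕ → Finset ℕ) (hP0 : P 0 = ∅) (hPsub : ∀ k, P k ⊆ P (k+1))
    (hsmall : ∀ k, ∑ n ∈ P k, v k n ≤ ε k)
    (htail : ∀ k, (∑' n, v k n) - ε k ≤ ∑ n ∈ P (k+1), v k n)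
    (u : ℕ → ℝ) (hu0 : ∀ n, 0 ≤ u n) (hsumu : Summable u)
    (habs : ∀ n, Summable (fun j : ℕ => (1/((j:ℝ)+1)) * v j n))
    (hlower : ∀ (k n : ℕ), (1/((k:ℝ)+1)) * v k n
      - ∑' (j : ℕ), (if j = k then 0 else (1/((j:ℝ)+1)) * v j n) ≤ u n) :
    False := by
  classical
  set c : ℕ → ℝ := fun k => 1/((k:ℝ)+1) with hc
  have hc0 : ∀ k, 0 ≤ c k := fun k => by positivity
  have hc1 : ∀ k, c k ≤ 1 := fun k => by
    rw [hc]; rw [div_le_one (by positivity)]; linarith [Nat.cast_nonneg (α := ℝ) k]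
  have hPle : ∀ {a b : ℕ}, a ≤ b → P a ⊆ P b := by
    intro a b hab
    exact monotone_nat_of_le_succ (f := P) (fun k => Finset.le_iff_subset.mpr (hPsub k)) hab
  set G : ℕ → Finset ℕ := fun k => P (k+1) \ P k with hG
  -- Step A
  have hGmass : ∀ k, α/2 ≤ ∑ n ∈ G k, v k n := by
    intro k
    have h1 := Finset.sum_sdiff (f := v k) (hPsub k)
    have h2 := htail k
    have h3 := hsmall k
    have h4 := htot k
    have h5 := hε1 k
    rw [hG]
    linarith
  -- Step B
  have hpart : ∀ (K : ℕ) (h : ℕ → ℝ), ∑ n ∈ P K, h n = ∑ k ∈ Finset.range K, ∑ n ∈ G k, h n := by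
    intro K h
    induction K with
    | zero => simp [hP0]
    | succ K ih =>
        rw [Finset.sum_range_succ, ← ih, hG]
        rw [← Finset.sum_sdiff (f := h) (hPsub K)]
        ring
  -- Step C : error bound for fixed j, K
  have herr : ∀ (j K : ℕ),
      ∑ k ∈ Finset.range K, (if j = k then 0 else ∑ n ∈ G k, v j n) ≤ 2 * ε j := by
    intro j K
    have hrw : ∑ k ∈ Finset.range K, (if j = k then 0 else ∑ n ∈ G k, v j n)
        = ∑ k ∈ (Finset.range K).erase j, ∑ n ∈ G k, v j n := by
      rw [← Finset.sum_erase (Finset.range K) (a := j)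
        (f := fun k => if j = k then 0 else ∑ n ∈ G k, v j n) (by simp)]
      refine Finset.sum_congr rfl fun k hk => ?_
      rw [if_neg (Ne.symm (Finset.ne_of_mem_erase hk))]
    rw [hrw]
    by_cases hjK : j < K
    · have h1 : ∑ k ∈ (Finset.range K).erase j, ∑ n ∈ G k, v j n
          = (∑ k ∈ Finset.range K, ∑ n ∈ G k, v j n) - ∑ n ∈ G j, v j n := by
        rw [Finset.sum_erase_eq_sub (Finset.mem_range.mpr hjK)]
      rw [h1, ← hpart K]
      have h2 : ∑ n ∈ P K, v j n ≤ ∑' n, v j n :=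
        Summable.sum_le_tsum _ (fun n _ => hv0 j n) (hsumv j)
      have h3 : ∑ n ∈ G j, v j n + ∑ n ∈ P j, v j n = ∑ n ∈ P (j+1), v j n :=
        Finset.sum_sdiff (hPsub j)
      have h4 := htail j
      have h5 := hsmall j
      linarith
    · have hsub : (Finset.range K).erase j = Finset.range K := by
        apply Finset.erase_eq_of_notMem
        simp only [Finset.mem_range]
        omega
      rw [hsub, ← hpart K]
      have h2 : ∑ n ∈ P K, v j n ≤ ∑ n ∈ P j, v j n :=
        Finset.sum_le_sum_of_subset_of_nonneg (hPle (by omega)) (fun n _ _ => hv0 j n)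
      have h3 := hsmall j
      have h4 := hε0 j
      linarith
  -- summability of the error tails
  have hsummand : ∀ (n k : ℕ), Summable (fun j : ℕ => if j = k then 0 else c j * v j n) := by
    intro n k
    refine Summable.of_nonneg_of_le (fun j => ?_) (fun j => ?_) (habs n)
    · by_cases h : j = k
      · rw [if_pos h]
      · rw [if_neg h]
        exact mul_nonneg (hc0 j) (hv0 j n)
    · by_cases h : j = k
      · rw [if_pos h]
        exact mul_nonneg (hc0 j) (hv0 j n)
      · rw [if_neg h]
  -- Step D
  have hD : ∀ k, c k * (∑ n ∈ G k, v k n)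
      - ∑ n ∈ G k, ∑' (j : ℕ), (if j = k then 0 else c j * v j n) ≤ ∑ n ∈ G k, u n := by
    intro k
    have h1 := Finset.sum_le_sum (f := fun n => c k * v k n
      - ∑' (j : ℕ), (if j = k then 0 else c j * v j n)) (g := u) (s := G k)
      (fun n _ => hlower k n)
    rw [Finset.sum_sub_distrib, ← Finset.mul_sum] at h1
    exact h1
  -- Step E
  have hE : ∀ k, ∑ n ∈ G k, ∑' (j : ℕ), (if j = k then 0 else c j * v j n)
      = ∑' (j : ℕ), (if j = k then 0 else c j * ∑ n ∈ G k, v j n) := by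
    intro k
    rw [← Summable.tsum_finsetSum (fun n _ => hsummand n k)]
    refine tsum_congr fun j => ?_
    by_cases h : j = k
    · simp [h]
    · simp only [if_neg h, Finset.mul_sum]
  have hejk_sum : ∀ k, Summable (fun j : ℕ => if j = k then 0 else c j * ∑ n ∈ G k, v j n) := by
    intro k
    have hmaj : Summable (fun j : ℕ => ∑ n ∈ G k, c j * v j n) :=
      summable_sum (fun n _ => habs n)
    refine Summable.of_nonneg_of_le (fun j => ?_) (fun j => ?_) hmaj
    · by_cases h : j = k
      · rw [if_pos h]
      · rw [if_neg h]
        exact mul_nonneg (hc0 j) (Finset.sum_nonneg (fun n _ => hv0 j n))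
    · by_cases h : j = k
      · rw [if_pos h]
        exact Finset.sum_nonneg (fun n _ => mul_nonneg (hc0 j) (hv0 j n))
      · rw [if_neg h, Finset.mul_sum]
  -- Step F : total error bound
  have hEK : ∀ K, ∑ k ∈ Finset.range K, ∑' (j : ℕ), (if j = k then 0 else c j * ∑ n ∈ G k, v j n)
      ≤ 4 := by
    intro K
    rw [← Summable.tsum_finsetSum (fun k _ => hejk_sum k)]
    have hgeo : Summable (fun j : ℕ => 2 * (1/2 : ℝ)^j) :=
      (summable_geometric_two).mul_left 2
    have h1 : ∀ j : ℕ, ∑ k ∈ Finset.range K, (if j = k then 0 else c j * ∑ n ∈ G k, v j n)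
        ≤ 2 * (1/2 : ℝ)^j := by
      intro j
      have h2 : ∑ k ∈ Finset.range K, (if j = k then 0 else c j * ∑ n ∈ G k, v j n)
          = c j * ∑ k ∈ Finset.range K, (if j = k then 0 else ∑ n ∈ G k, v j n) := by
        rw [Finset.mul_sum]
        refine Finset.sum_congr rfl fun k _ => ?_
        by_cases h : j = k <;> simp [h]
      rw [h2]
      have hT0 : (0:ℝ) ≤ ∑ k ∈ Finset.range K, (if j = k then 0 else ∑ n ∈ G k, v j n) :=
        Finset.sum_nonneg (fun k _ => by
          by_cases h : j = k
          · simp [h]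
          · simp only [if_neg h]
            exact Finset.sum_nonneg (fun n _ => hv0 j n))
      calc c j * ∑ k ∈ Finset.range K, (if j = k then 0 else ∑ n ∈ G k, v j n)
          ≤ 1 * ∑ k ∈ Finset.range K, (if j = k then 0 else ∑ n ∈ G k, v j n) :=
            mul_le_mul_of_nonneg_right (hc1 j) hT0
        _ ≤ 2 * ε j := by rw [one_mul]; exact herr j K
        _ ≤ 2 * (1/2:ℝ)^j := by linarith [hε2 j]
    calc ∑' (j : ℕ), ∑ k ∈ Finset.range K, (if j = k then 0 else c j * ∑ n ∈ G k, v j n)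
        ≤ ∑' (j : ℕ), 2 * (1/2 : ℝ)^j :=
          Summable.tsum_le_tsum h1 (summable_sum (fun k _ => hejk_sum k)) hgeo
      _ = 2 * 2 := by rw [tsum_mul_left, tsum_geometric_two]
      _ = 4 := by norm_num
  -- Step G : conclusion
  set M : ℝ := ∑' n, u n with hM
  have hKbound : ∀ K, (α/2) * (∑ k ∈ Finset.range K, c k) - 4 ≤ M := by
    intro K
    have h1 : ∑ n ∈ P K, u n ≤ M := Summable.sum_le_tsum _ (fun n _ => hu0 n) hsumu
    rw [hpart K u] at h1
    have h2 : ∑ k ∈ Finset.range K, (c k * (∑ n ∈ G k, v k n)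
        - ∑ n ∈ G k, ∑' (j : ℕ), (if j = k then 0 else c j * v j n))
        ≤ ∑ k ∈ Finset.range K, ∑ n ∈ G k, u n :=
      Finset.sum_le_sum (fun k _ => hD k)
    rw [Finset.sum_sub_distrib] at h2
    have h3 : ∑ k ∈ Finset.range K, ∑ n ∈ G k, ∑' (j : ℕ), (if j = k then 0 else c j * v j n)
        ≤ 4 := by
      calc ∑ k ∈ Finset.range K, ∑ n ∈ G k, ∑' (j : ℕ), (if j = k then 0 else c j * v j n)
          = ∑ k ∈ Finset.range K, ∑' (j : ℕ), (if j = k then 0 else c j * ∑ n ∈ G k, v j n) :=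
            Finset.sum_congr rfl (fun k _ => hE k)
        _ ≤ 4 := hEK K
    have h4 : (α/2) * (∑ k ∈ Finset.range K, c k) ≤ ∑ k ∈ Finset.range K, c k * (∑ n ∈ G k, v k n) := by
      rw [Finset.mul_sum]
      refine Finset.sum_le_sum fun k _ => ?_
      rw [mul_comm (α/2) (c k)]
      exact mul_le_mul_of_nonneg_left (hGmass k) (hc0 k)
    linarith
  have hM0 : 0 ≤ M := tsum_nonneg hu0
  obtain ⟨K, hK⟩ :=
    (Real.tendsto_sum_range_one_div_nat_succ_atTop.eventually_ge_atTop ((M+5)*(2/α))).exists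
  have hKc : (M+5)*(2/α) ≤ ∑ k ∈ Finset.range K, c k := hK
  have h5 : (α/2) * ((M+5)*(2/α)) ≤ (α/2) * (∑ k ∈ Finset.range K, c k) :=
    mul_le_mul_of_nonneg_left hKc (by positivity)
  have h6 : (α/2) * ((M+5)*(2/α)) = M + 5 := by field_simp
  have := hKbound K
  linarith


theorem stmt14 {H : Type*} [NormedAddCommGroup H] [InnerProductSpace ℂ H] [CompleteSpace H] (b₀ : HilbertBasis ℕ ℂ H) (x : ℕ → H) (hx : IsFrame x) :
    {y : H | l1Norm x y ≠ ⊤} ≠ Set.univ := by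
  classical
  intro huniv
  have hfin : ∀ y : H, l1Norm x y ≠ ⊤ := Set.eq_univ_iff_forall.mp huniv
  obtain ⟨A, B, hA, hAB, hframe⟩ := hx
  have hframe' : ∀ y : H,
      (A : ℝ≥0∞) * (‖y‖₊ : ℝ≥0∞) ^ 2 ≤ ∑' n, (‖(inner ℂ y (x n) : ℂ)‖₊ : ℝ≥0∞) ^ 2 :=
    fun y => (hframe y).1
  -- coefficients of every vector are absolutely summable
  have hsummable : ∀ y : H, Summable (fun n => ‖(inner ℂ y (x n) : ℂ)‖) := by
    intro y
    have h := hfin y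
    simp only [l1Norm] at h
    rw [ENNReal.tsum_coe_ne_top_iff_summable] at h
    exact (NNReal.summable_coe.mpr h).congr (fun n => coe_nnnorm _)
  set α : ℝ := Real.sqrt A with hαdef
  have hαpos : 0 < α := Real.sqrt_pos.mpr (by exact_mod_cast hA)
  -- lower bound on the ℓ¹ mass of coefficients of unit vectors
  have hlow : ∀ y : H, ‖y‖ = 1 → α ≤ ∑' n, ‖(inner ℂ y (x n) : ℂ)‖ := by
    intro y hy
    have hs := hsummable y
    set T : ℝ := ∑' n, ‖(inner ℂ y (x n) : ℂ)‖ with hT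
    have hT0 : 0 ≤ T := tsum_nonneg (fun n => norm_nonneg _)
    have hle : ∀ n, ‖(inner ℂ y (x n) : ℂ)‖ ≤ T := fun n => Summable.le_tsum hs n (fun m _ => norm_nonneg _)
    have hsq : Summable (fun n => ‖(inner ℂ y (x n) : ℂ)‖ ^ 2) := by
      refine Summable.of_nonneg_of_le (fun n => sq_nonneg _) (fun n => ?_) (hs.mul_right T)
      rw [sq]
      exact mul_le_mul_of_nonneg_left (hle n) (norm_nonneg _)
    have hsqnn : Summable (fun n => ‖(inner ℂ y (x n) : ℂ)‖₊ ^ 2) := by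
      rw [← NNReal.summable_coe]
      convert hsq using 2 with n
      push_cast; rfl
    have hcoe : (∑' n, (‖(inner ℂ y (x n) : ℂ)‖₊ : ℝ≥0∞) ^ 2)
        = ((∑' n, ‖(inner ℂ y (x n) : ℂ)‖₊ ^ 2 : ℝ≥0) : ℝ≥0∞) := by
      rw [ENNReal.coe_tsum hsqnn]
      simp [ENNReal.coe_pow]
    have hy1 : (‖y‖₊ : ℝ≥0∞) = 1 := by
      have : ‖y‖₊ = 1 := by ext; simp [coe_nnnorm, hy]
      rw [this]; rfl
    have h1 := hframe' y
    rw [hy1, hcoe] at h1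
    simp only [one_pow, mul_one] at h1
    have h2 : (A : ℝ) ≤ ∑' n, ‖(inner ℂ y (x n) : ℂ)‖ ^ 2 := by
      have h3 : (A : ℝ≥0) ≤ ∑' n, ‖(inner ℂ y (x n) : ℂ)‖₊ ^ 2 := by exact_mod_cast h1
      calc (A : ℝ) ≤ ((∑' n, ‖(inner ℂ y (x n) : ℂ)‖₊ ^ 2 : ℝ≥0) : ℝ) := by exact_mod_cast h3
      _ = ∑' n, ‖(inner ℂ y (x n) : ℂ)‖ ^ 2 := by
          rw [NNReal.coe_tsum]
          push_cast
          rfl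
    have h4 : ∑' n, ‖(inner ℂ y (x n) : ℂ)‖ ^ 2 ≤ T * T := by
      calc ∑' n, ‖(inner ℂ y (x n) : ℂ)‖ ^ 2 ≤ ∑' n, ‖(inner ℂ y (x n) : ℂ)‖ * T := by
            refine Summable.tsum_le_tsum (fun n => ?_) hsq (hs.mul_right T)
            rw [sq]
            exact mul_le_mul_of_nonneg_left (hle n) (norm_nonneg _)
      _ = T * T := by rw [tsum_mul_right]
    have h5 : (A : ℝ) ≤ T ^ 2 := by nlinarith
    calc α ≤ Real.sqrt (T ^ 2) := Real.sqrt_le_sqrt h5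
    _ = T := by rw [Real.sqrt_sq hT0]
  -- square-summability of the coefficients of the frame vectors along the basis
  have hsqm : ∀ n : ℕ, Summable (fun i : ℕ => ‖(inner ℂ (b₀ i) (x n) : ℂ)‖ ^ 2) := by
    intro n
    have h1 : Summable (fun i : ℕ => ‖(b₀.repr (x n) : ℕ → ℂ) i‖ ^ ((2:ℝ≥0∞).toReal)) :=
      (lp.memℓp (b₀.repr (x n))).summable (by norm_num)
    have h2 : Summable (fun i : ℕ => ‖(b₀.repr (x n) : ℕ → ℂ) i‖ ^ 2) := by
      convert h1 using 2 with i
      rw [show ((2:ℝ≥0∞).toReal) = (2:ℝ) by norm_num, ← Real.rpow_natCast]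
      norm_num
    convert h2 using 2 with i
    rw [b₀.repr_apply_apply]
  have hdecay : ∀ n : ℕ,
      Filter.Tendsto (fun i : ℕ => ‖(inner ℂ (b₀ i) (x n) : ℂ)‖) Filter.atTop (nhds 0) := by
    intro n
    have h2 := (hsqm n).tendsto_atTop_zero
    have h3 : Filter.Tendsto (fun i : ℕ => Real.sqrt (‖(inner ℂ (b₀ i) (x n) : ℂ)‖ ^ 2))
        Filter.atTop (nhds (Real.sqrt 0)) := (Real.continuous_sqrt.tendsto 0).comp h2
    simpa [Real.sqrt_sq (norm_nonneg _)] using h3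
  -- one step of the gliding-hump construction
  have hstep : ∀ (prev : ℕ) (P : Finset ℕ) (e : ℝ), 0 < e →
      ∃ q : ℕ × Finset ℕ, prev < q.1 ∧ P ⊆ q.2 ∧
        (∑ n ∈ P, ‖(inner ℂ (b₀ q.1) (x n) : ℂ)‖ ≤ e) ∧
        ((∑' n, ‖(inner ℂ (b₀ q.1) (x n) : ℂ)‖) - e ≤ ∑ n ∈ q.2, ‖(inner ℂ (b₀ q.1) (x n) : ℂ)‖) := by
    intro prev P e he
    have h1 : Filter.Tendsto (fun i : ℕ => ∑ n ∈ P, ‖(inner ℂ (b₀ i) (x n) : ℂ)‖)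
        Filter.atTop (nhds 0) := by
      have := tendsto_finset_sum P (fun n _ => hdecay n)
      simpa using this
    have h2 : ∀ᶠ i in Filter.atTop, ∑ n ∈ P, ‖(inner ℂ (b₀ i) (x n) : ℂ)‖ ≤ e :=
      h1.eventually_le_const he
    obtain ⟨i, hi1, hi2⟩ := (h2.and (Filter.eventually_gt_atTop prev)).exists
    have hs := hsummable (b₀ i)
    have h3 : Filter.Tendsto (fun s : Finset ℕ => ∑ n ∈ s, ‖(inner ℂ (b₀ i) (x n) : ℂ)‖)
        Filter.atTop (nhds (∑' n, ‖(inner ℂ (b₀ i) (x n) : ℂ)‖)) := hs.hasSum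
    have h4 : ∀ᶠ s : Finset ℕ in Filter.atTop,
        (∑' n, ‖(inner ℂ (b₀ i) (x n) : ℂ)‖) - e < ∑ n ∈ s, ‖(inner ℂ (b₀ i) (x n) : ℂ)‖ :=
      h3.eventually_const_lt (by linarith)
    obtain ⟨S₀, hS₀⟩ := h4.exists
    refine ⟨⟨i, S₀ ∪ P⟩, hi2, Finset.subset_union_right, hi1, ?_⟩
    have h5 : ∑ n ∈ S₀, ‖(inner ℂ (b₀ i) (x n) : ℂ)‖ ≤ ∑ n ∈ S₀ ∪ P, ‖(inner ℂ (b₀ i) (x n) : ℂ)‖ :=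
      Finset.sum_le_sum_of_subset_of_nonneg Finset.subset_union_left (fun _ _ _ => norm_nonneg _)
    linarith
  -- the recursive construction
  set ε : ℕ → ℝ := fun k => min (α/4) ((1/2)^k) with hεdef
  have hεpos : ∀ k, 0 < ε k := fun k => lt_min (by positivity) (by positivity)
  have hε1 : ∀ k, ε k ≤ α/4 := fun k => min_le_left _ _
  have hε2 : ∀ k, ε k ≤ (1/2)^k := fun k => min_le_right _ _
  have hconstr : ∃ (m : ℕ → ℕ) (P : ℕ → Finset ℕ), StrictMono m ∧ P 0 = ∅ ∧
      (∀ k, P k ⊆ P (k+1)) ∧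
      (∀ k, ∑ n ∈ P k, ‖(inner ℂ (b₀ (m k)) (x n) : ℂ)‖ ≤ ε k) ∧
      (∀ k, (∑' n, ‖(inner ℂ (b₀ (m k)) (x n) : ℂ)‖) - ε k
        ≤ ∑ n ∈ P (k+1), ‖(inner ℂ (b₀ (m k)) (x n) : ℂ)‖) := by
    choose step h1 h2 h3 h4 using hstep
    set F : ℕ → ℕ × Finset ℕ := fun k =>
      Nat.rec (step 0 ∅ (ε 0) (hεpos 0)) (fun k ih => step ih.1 ih.2 (ε (k+1)) (hεpos (k+1))) k
      with hF
    set m : ℕ → ℕ := fun k => (F k).1 with hm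
    set P : ℕ → Finset ℕ := fun k => Nat.rec ∅ (fun k _ => (F k).2) k with hP
    have hFsucc : ∀ k, F (k+1) = step (F k).1 (F k).2 (ε (k+1)) (hεpos (k+1)) := fun k => rfl
    have hPsucc : ∀ k, P (k+1) = (F k).2 := fun k => rfl
    have hF0 : F 0 = step 0 ∅ (ε 0) (hεpos 0) := rfl
    refine ⟨m, P, strictMono_nat_of_lt_succ fun k => ?_, rfl, fun k => ?_, fun k => ?_,
      fun k => ?_⟩
    · show (F k).1 < (F (k+1)).1
      rw [hFsucc k]; exact h1 _ _ _ _
    · cases k with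
      | zero => show (∅ : Finset ℕ) ⊆ P 1; exact Finset.empty_subset _
      | succ k =>
          show (F k).2 ⊆ (F (k+1)).2
          rw [hFsucc k]; exact h2 _ _ _ _
    · cases k with
      | zero => show ∑ n ∈ (∅ : Finset ℕ), ‖(inner ℂ (b₀ ((F 0).1)) (x n) : ℂ)‖ ≤ ε 0
                simpa using (hεpos 0).le
      | succ k =>
          show ∑ n ∈ (F k).2, ‖(inner ℂ (b₀ ((F (k+1)).1)) (x n) : ℂ)‖ ≤ ε (k+1)
          rw [hFsucc k]; exact h3 _ _ _ _
    · cases k with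
      | zero =>
          show (∑' n, ‖(inner ℂ (b₀ ((F 0).1)) (x n) : ℂ)‖) - ε 0
            ≤ ∑ n ∈ (F 0).2, ‖(inner ℂ (b₀ ((F 0).1)) (x n) : ℂ)‖
          rw [hF0]; exact h4 _ _ _ _
      | succ k =>
          show (∑' n, ‖(inner ℂ (b₀ ((F (k+1)).1)) (x n) : ℂ)‖) - ε (k+1)
            ≤ ∑ n ∈ (F (k+1)).2, ‖(inner ℂ (b₀ ((F (k+1)).1)) (x n) : ℂ)‖
          rw [hFsucc k]; exact h4 _ _ _ _
  obtain ⟨m, P, hmmono, hP0, hPsub, hsmall, htail⟩ := hconstr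
  -- construct the bad vector y
  set c : ℕ → ℝ := fun k => 1/((k:ℝ)+1) with hcdef
  have hc0 : ∀ k, 0 ≤ c k := fun k => by positivity
  have hc2 : Summable (fun k => (c k) ^ 2) := by
    have h0 : Summable (fun n : ℕ => 1/(n:ℝ)^2) := Real.summable_one_div_nat_pow.mpr one_lt_two
    have := (summable_nat_add_iff 1).mpr h0
    refine this.congr fun k => ?_
    rw [hcdef]
    push_cast
    rw [one_div, one_div, ← inv_pow]
  have horth : Orthonormal ℂ (fun k => b₀ (m k)) := b₀.orthonormal.comp m hmmono.injective
  have hysum : Summable (fun k => ((c k : ℝ) : ℂ) • b₀ (m k)) := by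
    have h1 := (horth.orthogonalFamily.summable_iff_norm_sq_summable
      (fun k => ((c k : ℝ) : ℂ))).mpr (by
        refine hc2.congr fun k => ?_
        simp [sq_abs])
    refine h1.congr fun k => ?_
    rw [LinearIsometry.toSpanSingleton_apply]
  obtain ⟨y, hy⟩ := hysum
  have hcoef : ∀ n, HasSum (fun k : ℕ => ((c k : ℝ) : ℂ) * (inner ℂ (b₀ (m k)) (x n) : ℂ))
      (inner ℂ y (x n) : ℂ) := by
    intro n
    have h1 : HasSum (fun k => (inner ℂ (x n) (((c k : ℝ) : ℂ) • b₀ (m k)) : ℂ))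
        (inner ℂ (x n) y : ℂ) := (innerSL ℂ (x n)).hasSum hy
    have h2 := h1.star
    have h3 : (starRingEnd ℂ) (inner ℂ (x n) y : ℂ) = inner ℂ y (x n) := inner_conj_symm _ _
    rw [show star (inner ℂ (x n) y : ℂ) = (starRingEnd ℂ) (inner ℂ (x n) y : ℂ) from rfl, h3] at h2
    have h4 : ∀ k : ℕ, star (inner ℂ (x n) (((c k : ℝ) : ℂ) • b₀ (m k)) : ℂ)
        = ((c k : ℝ) : ℂ) * (inner ℂ (b₀ (m k)) (x n) : ℂ) := by
      intro k
      rw [inner_smul_right]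
      rw [show star (((c k : ℝ) : ℂ) * (inner ℂ (x n) (b₀ (m k)) : ℂ))
        = (starRingEnd ℂ) (((c k : ℝ) : ℂ) * (inner ℂ (x n) (b₀ (m k)) : ℂ)) from rfl]
      rw [map_mul, Complex.conj_ofReal, inner_conj_symm]
    exact (funext h4) ▸ h2
  -- absolute summability of the mixed series
  have habs : ∀ n, Summable (fun j : ℕ => c j * ‖(inner ℂ (b₀ (m j)) (x n) : ℂ)‖) := by
    intro n
    have h1 : Summable (fun j : ℕ => ‖(inner ℂ (b₀ (m j)) (x n) : ℂ)‖ ^ 2) :=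
      (hsqm n).comp_injective hmmono.injective
    refine Summable.of_nonneg_of_le (fun j => mul_nonneg (hc0 j) (norm_nonneg _))
      (fun j => ?_) (((hc2.add h1).div_const 2))
    have := two_mul_le_add_sq (c j) ‖(inner ℂ (b₀ (m j)) (x n) : ℂ)‖
    linarith
  -- the key pointwise lower bound
  have hlower : ∀ (k n : ℕ), c k * ‖(inner ℂ (b₀ (m k)) (x n) : ℂ)‖
      - (∑' (j : ℕ), if j = k then 0 else c j * ‖(inner ℂ (b₀ (m j)) (x n) : ℂ)‖)
      ≤ ‖(inner ℂ y (x n) : ℂ)‖ := by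
    intro k n
    set f : ℕ → ℂ := fun j => ((c j : ℝ) : ℂ) * (inner ℂ (b₀ (m j)) (x n) : ℂ) with hfdef
    have hsumf : Summable f := (hcoef n).summable
    have htsum : ∑' j, f j = inner ℂ y (x n) := (hcoef n).tsum_eq
    have t1 := Summable.tsum_eq_add_tsum_ite hsumf k
    have hnormf : ∀ j, ‖f j‖ = c j * ‖(inner ℂ (b₀ (m j)) (x n) : ℂ)‖ := by
      intro j
      rw [hfdef]
      simp only [norm_mul, Complex.norm_real, Real.norm_eq_abs, abs_of_nonneg (hc0 j)]
    have hite_norm : ∀ j : ℕ, ‖(if j = k then 0 else f j)‖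
        = (if j = k then 0 else c j * ‖(inner ℂ (b₀ (m j)) (x n) : ℂ)‖) := by
      intro j
      by_cases h : j = k
      · simp [h]
      · rw [if_neg h, if_neg h, hnormf j]
    have hsum_ite : Summable (fun j : ℕ => ‖(if j = k then 0 else f j)‖) := by
      refine Summable.of_nonneg_of_le (fun j => norm_nonneg _) (fun j => ?_) (habs n)
      rw [hite_norm j]
      by_cases h : j = k
      · rw [if_pos h]
        exact mul_nonneg (hc0 j) (norm_nonneg _)
      · rw [if_neg h]
    have hR : ‖∑' (j : ℕ), if j = k then 0 else f j‖
        ≤ ∑' (j : ℕ), if j = k then 0 else c j * ‖(inner ℂ (b₀ (m j)) (x n) : ℂ)‖ := by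
      calc ‖∑' (j : ℕ), if j = k then 0 else f j‖
          ≤ ∑' (j : ℕ), ‖(if j = k then 0 else f j)‖ := norm_tsum_le_tsum_norm hsum_ite
        _ = ∑' (j : ℕ), if j = k then 0 else c j * ‖(inner ℂ (b₀ (m j)) (x n) : ℂ)‖ :=
            tsum_congr hite_norm
    have h6 : ‖f k‖ ≤ ‖f k + ∑' (j : ℕ), if j = k then 0 else f j‖
        + ‖∑' (j : ℕ), if j = k then 0 else f j‖ := norm_le_add_norm_add _ _
    have h7 : (inner ℂ y (x n) : ℂ) = f k + ∑' (j : ℕ), if j = k then 0 else f j := by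
      rw [← htsum, t1]
    rw [← hnormf k]
    rw [h7]
    linarith
  -- assemble the contradiction
  exact frame_l1_aux α hαpos ε (fun k => (hεpos k).le) hε1 hε2
    (fun k n => ‖(inner ℂ (b₀ (m k)) (x n) : ℂ)‖) (fun k n => norm_nonneg _)
    (fun k => hsummable (b₀ (m k)))
    (fun k => hlow (b₀ (m k)) (b₀.orthonormal.1 (m k)))
    P hP0 hPsub hsmall htail
    (fun n => ‖(inner ℂ y (x n) : ℂ)‖) (fun n => norm_nonneg _) (hsummable y)
    habs hlower
end

section
/- For any infinite-dimensional closed subspace S of H, the unit disk D_S = {x ∈ S : ‖x‖ = 1} is not ℓ¹-frame-bounded in H; i.e., for every frame {x_n} of H, sup_{x∈D_S} Σ_n |⟨x, x_n⟩| = ∞. -/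
open scoped ENNReal NNReal

lemma exists_orthonormal_seq {H : Type*} [NormedAddCommGroup H] [InnerProductSpace ℂ H]
    [CompleteSpace H] (S : Submodule ℂ H) (hSc : IsClosed (S : Set H))
    (hSd : ¬ FiniteDimensional ℂ S) :
    ∃ e : ℕ → H, Orthonormal ℂ e ∧ ∀ k, e k ∈ S := by
  haveI : CompleteSpace S := hSc.completeSpace_coe
  obtain ⟨w, b, hb⟩ := exists_hilbertBasis ℂ S
  have hw : w.Infinite := by
    by_contra hni
    rw [Set.not_infinite] at hni
    apply hSd
    have hspan : Submodule.span ℂ w = (⊤ : Submodule ℂ S) := by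
      have h1 := b.dense_span
      rw [hb] at h1
      have h2 : Set.range (Subtype.val : w → S) = w := Subtype.range_coe
      rw [h2] at h1
      haveI : FiniteDimensional ℂ (Submodule.span ℂ w) := FiniteDimensional.span_of_finite ℂ hni
      rw [(Submodule.span ℂ w).closed_of_finiteDimensional.submodule_topologicalClosure_eq] at h1
      exact h1
    exact ⟨⟨hni.toFinset, by simpa using hspan⟩⟩
  classical
  let f : ℕ ↪ w := hw.natEmbedding
  refine ⟨fun k => ((f k : S) : H), ?_, fun k => (f k : S).2⟩
  have hon : Orthonormal ℂ (fun k => (f k : S)) := by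
    have hon0 := b.orthonormal
    rw [hb] at hon0
    exact hon0.comp f f.injective
  rw [orthonormal_iff_ite] at hon ⊢
  intro i j
  rw [← Submodule.coe_inner]
  exact hon i j


lemma sum_erase_comm {s : Finset ℕ} (g : ℕ → ℕ → ℝ) :
    ∑ j ∈ s, ∑ i ∈ s.erase j, g i j = ∑ i ∈ s, ∑ j ∈ s.erase i, g i j := by
  classical
  have k1 : ∀ j ∈ s, ∑ i ∈ s.erase j, g i j = ∑ i ∈ s, if i = j then 0 else g i j := by
    intro j hj
    rw [eq_comm, ← Finset.sum_erase (a := j) s (by simp)]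
    exact Finset.sum_congr rfl fun i hi => by simp [Finset.ne_of_mem_erase hi]
  have k2 : ∀ i ∈ s, ∑ j ∈ s, (if i = j then 0 else g i j) = ∑ j ∈ s.erase i, g i j := by
    intro i hi
    rw [← Finset.sum_erase (a := i) s (by simp)]
    exact Finset.sum_congr rfl fun j hj => by simp [(Finset.ne_of_mem_erase hj).symm]
  rw [Finset.sum_congr rfl k1, Finset.sum_comm, Finset.sum_congr rfl k2]

lemma glide (c : ℕ → ℕ → ℝ) (hpos : ∀ k n, 0 ≤ c k n)
    (hsum : ∀ k, Summable (c k)) (m ε : ℝ) (hε : 0 < ε)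
    (hm : ∀ k, m ≤ ∑' n, c k n)
    (hcol : ∀ n, Filter.Tendsto (fun k => c k n) Filter.atTop (nhds 0)) (K : ℕ) :
    ∃ (k : ℕ → ℕ) (F : ℕ → Finset ℕ), (Function.Injective k) ∧
      (Set.PairwiseDisjoint ↑(Finset.range K) F) ∧
      (∀ j < K, m - 2*ε ≤ ∑ n ∈ F j, c (k j) n) ∧
      (∀ i < K, ∑ j ∈ (Finset.range K).erase i, ∑ n ∈ F j, c (k i) n ≤ 2*ε) := by
  classical
  -- key selection step
  have key : ∀ (G : Finset ℕ) (k₀ : ℕ), ∃ (k : ℕ) (F : Finset ℕ), k₀ ≤ k ∧ Disjoint F G ∧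
      (m - 2*ε ≤ ∑ n ∈ F, c k n) ∧ (∑ n ∈ G, c k n ≤ ε) ∧
      (∀ F' : Finset ℕ, Disjoint F' (F ∪ G) → ∑ n ∈ F', c k n ≤ ε) := by
    intro G k₀
    have htend : Filter.Tendsto (fun k => ∑ n ∈ G, c k n) Filter.atTop (nhds 0) := by
      have h := tendsto_finset_sum G (fun n _ => hcol n)
      simpa using h
    obtain ⟨k₁, hk₁⟩ := Filter.eventually_atTop.mp (htend.eventually (gt_mem_nhds hε))
    set k := max k₀ k₁ with hkdef
    have hG : ∑ n ∈ G, c k n ≤ ε := (hk₁ k (le_max_right _ _)).le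
    set s := ∑' n, c k n with hsdef
    have hs : HasSum (c k) s := (hsum k).hasSum
    obtain ⟨F₁, hF₁⟩ := Filter.eventually_atTop.mp (hs.eventually (Metric.ball_mem_nhds s hε))
    have hF₁s : s - ε ≤ ∑ n ∈ F₁, c k n := by
      have := hF₁ F₁ le_rfl
      rw [Real.dist_eq, abs_lt] at this
      linarith [this.1]
    refine ⟨k, F₁ \ G, le_max_left _ _, Finset.sdiff_disjoint, ?_, hG, ?_⟩
    · have he : F₁ \ G = F₁ \ (F₁ ∩ G) := by
        ext a
        simp only [Finset.mem_sdiff, Finset.mem_inter]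
        tauto
      have hsd := Finset.sum_sdiff (f := fun n => c k n)
        (Finset.inter_subset_left (s₁ := F₁) (s₂ := G))
      have hIG : ∑ n ∈ F₁ ∩ G, c k n ≤ ∑ n ∈ G, c k n :=
        Finset.sum_le_sum_of_subset_of_nonneg Finset.inter_subset_right (fun n _ _ => hpos k n)
      have hms := hm k
      rw [he]
      linarith
    · intro F' hdisj
      have hsub : F₁ ⊆ (F₁ \ G) ∪ G := by
        intro a ha
        by_cases hG' : a ∈ G <;> simp [Finset.mem_union, Finset.mem_sdiff, ha, hG']
      have hdF₁ : Disjoint F' F₁ := hdisj.mono_right hsub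
      have hle : ∑ n ∈ F₁ ∪ F', c k n ≤ s :=
        (hsum k).sum_le_tsum _ (fun n _ => hpos k n)
      rw [Finset.sum_union hdF₁.symm] at hle
      linarith
  choose k! F! hk1 hk2 hk3 hk4 hk5 using key
  -- the recursion: state (k, F, G)
  let init : ℕ × Finset ℕ × Finset ℕ := (k! ∅ 0, F! ∅ 0, ∅)
  let step : ℕ × Finset ℕ × Finset ℕ → ℕ × Finset ℕ × Finset ℕ :=
    fun p => (k! (p.2.2 ∪ p.2.1) (p.1 + 1), F! (p.2.2 ∪ p.2.1) (p.1 + 1), p.2.2 ∪ p.2.1)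
  let P : ℕ → ℕ × Finset ℕ × Finset ℕ := fun j => step^[j] init
  let kk : ℕ → ℕ := fun j => (P j).1
  let FF : ℕ → Finset ℕ := fun j => (P j).2.1
  let GG : ℕ → Finset ℕ := fun j => (P j).2.2
  have hPsucc : ∀ j, P (j+1) = step (P j) := fun j => Function.iterate_succ_apply' step j init
  have hGsucc : ∀ j, GG (j+1) = GG j ∪ FF j := by
    intro j
    show (P (j+1)).2.2 = (P j).2.2 ∪ (P j).2.1
    rw [hPsucc j]
  have hprop : ∀ j, Disjoint (FF j) (GG j) ∧ (m - 2*ε ≤ ∑ n ∈ FF j, c (kk j) n) ∧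
      (∑ n ∈ GG j, c (kk j) n ≤ ε) ∧
      (∀ F' : Finset ℕ, Disjoint F' (FF j ∪ GG j) → ∑ n ∈ F', c (kk j) n ≤ ε) := by
    intro j
    cases j with
    | zero => exact ⟨hk2 ∅ 0, hk3 ∅ 0, hk4 ∅ 0, hk5 ∅ 0⟩
    | succ i =>
      have h1 : kk (i+1) = k! (GG i ∪ FF i) (kk i + 1) := by
        show (P (i+1)).1 = _
        rw [hPsucc i]
      have h2 : FF (i+1) = F! (GG i ∪ FF i) (kk i + 1) := by
        show (P (i+1)).2.1 = _
        rw [hPsucc i]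
      have h3 : GG (i+1) = GG i ∪ FF i := hGsucc i
      rw [h1, h2, h3]
      exact ⟨hk2 _ _, hk3 _ _, hk4 _ _, hk5 _ _⟩
  have hkmono : StrictMono kk := by
    apply strictMono_nat_of_lt_succ
    intro j
    have h1 : kk (j+1) = k! (GG j ∪ FF j) (kk j + 1) := by
      show (P (j+1)).1 = _
      rw [hPsucc j]
    have := hk1 (GG j ∪ FF j) (kk j + 1)
    omega
  have hGmono : ∀ i j, i ≤ j → GG i ⊆ GG j := by
    intro i j hij
    induction j with
    | zero =>
      have : i = 0 := Nat.le_zero.mp hij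
      subst this; exact subset_rfl
    | succ a ih =>
      rcases Nat.lt_or_ge i (a+1) with h | h
      · refine (ih (by omega)).trans ?_
        rw [hGsucc a]
        exact Finset.subset_union_left
      · have : i = a + 1 := by omega
        subst this; exact subset_rfl
  have hFsubG : ∀ i j, i < j → FF i ⊆ GG j := by
    intro i j hij
    refine Finset.Subset.trans ?_ (hGmono (i+1) j (by omega))
    rw [hGsucc i]
    exact Finset.subset_union_right
  have hdij : ∀ i j, i ≠ j → Disjoint (FF i) (FF j) := by
    have base : ∀ i j, i < j → Disjoint (FF i) (FF j) := by
      intro i j hij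
      exact (((hprop j).1).mono_right (hFsubG i j hij)).symm
    intro i j hne
    rcases lt_or_gt_of_ne hne with h | h
    · exact base i j h
    · exact (base j i h).symm
  refine ⟨kk, FF, hkmono.injective, ?_, fun j _ => (hprop j).2.1, ?_⟩
  · intro a _ b _ hab
    exact hdij a b hab
  · intro i hiK
    have hsplit : (Finset.range K).erase i = Finset.range i ∪ Finset.Ico (i+1) K := by
      ext a
      simp only [Finset.mem_erase, Finset.mem_range, Finset.mem_union, Finset.mem_Ico]
      omega
    have hdisjr : Disjoint (Finset.range i) (Finset.Ico (i+1) K) := by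
      rw [Finset.disjoint_left]
      intro a ha hb
      simp only [Finset.mem_range] at ha
      simp only [Finset.mem_Ico] at hb
      omega
    rw [hsplit, Finset.sum_union hdisjr]
    have hT1 : ∑ j ∈ Finset.range i, ∑ n ∈ FF j, c (kk i) n ≤ ε := by
      rw [← Finset.sum_biUnion (fun a _ b _ hab => hdij a b hab)]
      refine le_trans (Finset.sum_le_sum_of_subset_of_nonneg ?_ (fun n _ _ => hpos _ n))
        (hprop i).2.2.1
      refine Finset.biUnion_subset.mpr fun j hj => ?_
      exact hFsubG j i (Finset.mem_range.mp hj)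
    have hT2 : ∑ j ∈ Finset.Ico (i+1) K, ∑ n ∈ FF j, c (kk i) n ≤ ε := by
      rw [← Finset.sum_biUnion (fun a _ b _ hab => hdij a b hab)]
      refine (hprop i).2.2.2 _ ?_
      rw [Finset.disjoint_left]
      intro a ha hb
      rw [Finset.mem_biUnion] at ha
      obtain ⟨j, hj, haj⟩ := ha
      rw [Finset.mem_Ico] at hj
      have h1 : Disjoint (FF j) (FF i ∪ GG i) := by
        refine ((hprop j).1).mono_right ?_
        rw [Finset.union_comm]
        rw [← hGsucc i]
        exact hGmono (i+1) j (by omega)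
      exact (Finset.disjoint_left.mp h1) haj hb
    linarith

theorem stmt15 {H : Type*} [NormedAddCommGroup H] [InnerProductSpace ℂ H] [CompleteSpace H] (S : Submodule ℂ H) (hSc : IsClosed (S : Set H))
    (hSd : ¬ FiniteDimensional ℂ S) (x : ℕ → H) (hx : IsFrame x) :
    (⨆ y ∈ {y : H | y ∈ S ∧ ‖y‖ = 1}, l1Norm x y) = ⊤ := by
  classical
  by_contra h
  obtain ⟨A, B, hA, hAB, hfr⟩ := hx
  obtain ⟨e, he, heS⟩ := exists_orthonormal_seq S hSc hSd
  set R : ℝ≥0∞ := ⨆ y ∈ {y : H | y ∈ S ∧ ‖y‖ = 1}, l1Norm x y with hRdef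
  have hRt : R ≠ ⊤ := h
  have hle : ∀ y : H, y ∈ S → ‖y‖ = 1 → l1Norm x y ≤ R := by
    intro y h1 h2
    exact le_biSup (f := fun y => l1Norm x y) (show y ∈ {y : H | y ∈ S ∧ ‖y‖ = 1} from ⟨h1, h2⟩)
  -- rows are summable with real sum ≤ R.toReal
  have hrow : ∀ y : H, y ∈ S → ‖y‖ = 1 →
      Summable (fun n => ‖(inner ℂ y (x n) : ℂ)‖) ∧
      (∑' n, ‖(inner ℂ y (x n) : ℂ)‖) ≤ R.toReal := by
    intro y h1 h2
    have hy := hle y h1 h2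
    have hne : l1Norm x y ≠ ⊤ := fun hh => hRt (top_le_iff.mp (hh ▸ hy))
    unfold l1Norm at hy hne
    have hsumnn : Summable (fun n => ‖(inner ℂ y (x n) : ℂ)‖₊) :=
      ENNReal.tsum_coe_ne_top_iff_summable.mp hne
    have hcoe : ((∑' n, ‖(inner ℂ y (x n) : ℂ)‖₊ : ℝ≥0) : ℝ≥0∞) ≤ R := by
      rw [ENNReal.coe_tsum hsumnn]; exact hy
    constructor
    · simpa using NNReal.summable_coe.mpr hsumnn
    · have h3 := ENNReal.toReal_mono hRt hcoe
      rw [ENNReal.coe_toReal] at h3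
      calc ∑' n, ‖(inner ℂ y (x n) : ℂ)‖
          = ((∑' n, ‖(inner ℂ y (x n) : ℂ)‖₊ : ℝ≥0) : ℝ) := by rw [NNReal.coe_tsum]; simp
        _ ≤ R.toReal := h3
  -- frame elements are bounded
  have hxB : ∀ n, ‖x n‖ ≤ Real.sqrt B := by
    intro n
    have hBr : (‖x n‖₊ : ℝ≥0∞) ^ 2 ≤ (B : ℝ≥0∞) := by
      rcases eq_or_ne (‖x n‖₊) 0 with h0 | h0
      · simp [h0]
      · have hup := (hfr (x n)).2
        have hself : ‖(inner ℂ (x n) (x n) : ℂ)‖₊ = ‖x n‖₊ ^ 2 := by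
          have h4 : (inner ℂ (x n) (x n) : ℂ) = (‖x n‖ : ℂ) ^ 2 := inner_self_eq_norm_sq_to_K (x n)
          apply NNReal.coe_injective
          rw [coe_nnnorm, h4]
          push_cast
          simp [sq_abs, sq, abs_mul, abs_norm]
        have hlow : ((‖x n‖₊ : ℝ≥0∞) ^ 2) ^ 2 ≤ ∑' m, (‖(inner ℂ (x n) (x m) : ℂ)‖₊ : ℝ≥0∞) ^ 2 := by
          have h5 := ENNReal.le_tsum (f := fun m => (‖(inner ℂ (x n) (x m) : ℂ)‖₊ : ℝ≥0∞) ^ 2) n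
          rw [hself] at h5
          simpa using h5
        have h6 := hlow.trans hup
        set t : ℝ≥0∞ := (‖x n‖₊ : ℝ≥0∞) ^ 2 with ht
        have h7 : t * t ≤ (B : ℝ≥0∞) * t := by
          calc t * t = t ^ 2 := (sq t).symm
            _ ≤ (B : ℝ≥0∞) * t := h6
        have htne : t ≠ 0 := by simp [ht, h0]
        have htt : t ≠ ⊤ := by simp [ht]
        exact (ENNReal.mul_le_mul_iff_left htne htt).mp h7
    have hBr2 : ‖x n‖ ^ 2 ≤ (B : ℝ) := by
      have := ENNReal.toReal_mono (by simp) hBr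
      simpa [← coe_nnnorm] using this
    rw [show Real.sqrt (B : ℝ) = Real.sqrt (B : ℝ) from rfl]
    exact Real.le_sqrt_of_sq_le hBr2
  -- set up the coefficient matrix
  set c : ℕ → ℕ → ℝ := fun k n => ‖(inner ℂ (e k) (x n) : ℂ)‖ with hc
  have hcpos : ∀ k n, 0 ≤ c k n := fun k n => norm_nonneg _
  have hcsum : ∀ k, Summable (c k) := fun k => (hrow (e k) (heS k) (he.1 k)).1
  have hcB : ∀ k n, c k n ≤ Real.sqrt B := by
    intro k n
    calc c k n ≤ ‖e k‖ * ‖x n‖ := norm_inner_le_norm _ _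
      _ = ‖x n‖ := by rw [he.1 k, one_mul]
      _ ≤ Real.sqrt B := hxB n
  have hBpos : (0 : ℝ) < B := lt_of_lt_of_le (by exact_mod_cast hA) (by exact_mod_cast hAB)
  have hsB : (0 : ℝ) < Real.sqrt B := Real.sqrt_pos.mpr hBpos
  set m : ℝ := (A : ℝ) / Real.sqrt B with hmdef
  have hmpos : 0 < m := div_pos (by exact_mod_cast hA) hsB
  -- lower bound for rows
  have hm : ∀ k, m ≤ ∑' n, c k n := by
    intro k
    have h1 : ‖e k‖₊ = 1 := NNReal.coe_injective (by simpa using he.1 k)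
    have hlo := (hfr (e k)).1
    have hup := (hfr (e k)).2
    rw [h1] at hlo hup
    simp only [ENNReal.coe_one, one_pow, mul_one] at hlo hup
    simp only [← ENNReal.coe_pow] at hlo hup
    have hne : (∑' n, ((‖(inner ℂ (e k) (x n) : ℂ)‖₊ ^ 2 : ℝ≥0) : ℝ≥0∞)) ≠ ⊤ :=
      ne_top_of_le_ne_top ENNReal.coe_ne_top hup
    have hsq : Summable (fun n => ‖(inner ℂ (e k) (x n) : ℂ)‖₊ ^ 2) :=
      ENNReal.tsum_coe_ne_top_iff_summable.mp hne
    rw [← ENNReal.coe_tsum hsq] at hlo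
    have hAle : (A : ℝ) ≤ ∑' n, c k n ^ 2 := by
      have h2 := ENNReal.coe_le_coe.mp hlo
      have h3 := NNReal.coe_le_coe.mpr h2
      rw [NNReal.coe_tsum] at h3
      simpa [hc] using h3
    have hsqr : Summable (fun n => c k n ^ 2) := by
      have := NNReal.summable_coe.mpr hsq
      simpa [hc] using this
    have hchain : ∑' n, c k n ^ 2 ≤ Real.sqrt B * ∑' n, c k n := by
      rw [← tsum_mul_left]
      refine hsqr.tsum_le_tsum ?_ ((hcsum k).mul_left _)
      intro n
      calc c k n ^ 2 = c k n * c k n := sq (c k n)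
        _ ≤ Real.sqrt B * c k n := mul_le_mul_of_nonneg_right (hcB k n) (hcpos k n)
    rw [hmdef, div_le_iff₀ hsB]
    calc (A : ℝ) ≤ Real.sqrt B * ∑' n, c k n := hAle.trans hchain
      _ = (∑' n, c k n) * Real.sqrt B := mul_comm _ _
  -- columns tend to zero
  have hcol : ∀ n, Filter.Tendsto (fun k => c k n) Filter.atTop (nhds 0) := by
    intro n
    have hb : Summable (fun k => ‖(inner ℂ (e k) (x n) : ℂ)‖ ^ 2) :=
      Orthonormal.inner_products_summable (x n) he
    have ht2 := hb.tendsto_atTop_zero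
    have ht3 := ht2.sqrt
    rw [Real.sqrt_zero] at ht3
    refine ht3.congr fun k => ?_
    exact Real.sqrt_sq (hcpos k n)
  -- choose K and run the gliding hump
  set ε : ℝ := m / 8 with hεdef
  have hε : 0 < ε := by positivity
  obtain ⟨K, hK⟩ := exists_nat_gt (max 1 ((2 * R.toReal / m) ^ 2))
  have hK1 : (1 : ℝ) ≤ (K : ℝ) := le_of_lt (lt_of_le_of_lt (le_max_left _ _) hK)
  have hKpos : (0 : ℝ) < (K : ℝ) := by linarith
  have hRnn : (0 : ℝ) ≤ R.toReal := ENNReal.toReal_nonneg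
  have hKs : R.toReal < Real.sqrt K * (m / 2) := by
    have h1 : (2 * R.toReal / m) ^ 2 < (K : ℝ) := lt_of_le_of_lt (le_max_right _ _) hK
    have h2 : 2 * R.toReal / m < Real.sqrt K := (Real.lt_sqrt (by positivity)).mpr h1
    have h3 : (2 * R.toReal / m) * (m / 2) = R.toReal := by field_simp
    calc R.toReal = (2 * R.toReal / m) * (m / 2) := h3.symm
      _ < Real.sqrt K * (m / 2) := mul_lt_mul_of_pos_right h2 (by positivity)
  obtain ⟨k, F, hkinj, hpd, h3, h4⟩ := glide c hcpos hcsum m ε hε hm hcol K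
  set y' : H := ∑ j ∈ Finset.range K, e (k j) with hy'def
  have hy'S : y' ∈ S := Submodule.sum_mem S fun j _ => heS (k j)
  have hok : Orthonormal ℂ (e ∘ k) := he.comp k hkinj
  have hinner : (inner ℂ y' y' : ℂ) = (K : ℂ) := by
    have hc2 := hok.inner_sum (fun _ => (1 : ℂ)) (fun _ => (1 : ℂ)) (Finset.range K)
    simpa [hy'def, Function.comp] using hc2
  have hny' : ‖y'‖ = Real.sqrt K := by
    have h5 := inner_self_eq_norm_sq (𝕜 := ℂ) y'
    rw [hinner] at h5
    have h6 : ‖y'‖ ^ 2 = (K : ℝ) := by simpa using h5.symm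
    rw [← h6, Real.sqrt_sq (norm_nonneg _)]
  have hy'pos : 0 < ‖y'‖ := by rw [hny']; exact Real.sqrt_pos.mpr hKpos
  set y : H := ((‖y'‖⁻¹ : ℝ) : ℂ) • y' with hydef
  have hyS : y ∈ S := S.smul_mem _ hy'S
  have hy1 : ‖y‖ = 1 := by
    rw [hydef, norm_smul, Complex.norm_real, Real.norm_eq_abs,
      abs_of_nonneg (inv_nonneg.mpr (norm_nonneg y')), inv_mul_cancel₀ hy'pos.ne']
  have hterm : ∀ j ∈ Finset.range K, ∀ n ∈ F j,
      c (k j) n - ∑ i ∈ (Finset.range K).erase j, c (k i) n ≤ ‖(inner ℂ y' (x n) : ℂ)‖ := by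
    intro j hj n _
    have hsi : (inner ℂ y' (x n) : ℂ) = ∑ i ∈ Finset.range K, (inner ℂ (e (k i)) (x n) : ℂ) := by
      rw [hy'def, sum_inner]
    set a : ℂ := (inner ℂ (e (k j)) (x n) : ℂ) with ha
    set b : ℂ := ∑ i ∈ (Finset.range K).erase j, (inner ℂ (e (k i)) (x n) : ℂ) with hb
    have hab : (inner ℂ y' (x n) : ℂ) = a + b := by
      rw [hsi, ← Finset.add_sum_erase _ _ hj]
    have h5 : ‖a‖ - ‖b‖ ≤ ‖a + b‖ := by
      have h6 := norm_sub_norm_le a (-b)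
      simpa [sub_neg_eq_add] using h6
    have h7 : ‖b‖ ≤ ∑ i ∈ (Finset.range K).erase j, c (k i) n := by
      rw [hb]; exact norm_sum_le _ _
    rw [hab]
    have h8 : c (k j) n = ‖a‖ := rfl
    linarith
  set N : Finset ℕ := (Finset.range K).biUnion F with hN
  have hmain : (K : ℝ) * (m / 2) ≤ ∑ n ∈ N, ‖(inner ℂ y' (x n) : ℂ)‖ := by
    rw [hN, Finset.sum_biUnion hpd]
    have hstep1 : ∑ j ∈ Finset.range K, ∑ n ∈ F j,
        (c (k j) n - ∑ i ∈ (Finset.range K).erase j, c (k i) n)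
        ≤ ∑ j ∈ Finset.range K, ∑ n ∈ F j, ‖(inner ℂ y' (x n) : ℂ)‖ :=
      Finset.sum_le_sum fun j hj => Finset.sum_le_sum fun n hn => hterm j hj n hn
    refine le_trans ?_ hstep1
    have hexp : ∀ j ∈ Finset.range K, ∑ n ∈ F j,
        (c (k j) n - ∑ i ∈ (Finset.range K).erase j, c (k i) n)
        = ∑ n ∈ F j, c (k j) n - ∑ i ∈ (Finset.range K).erase j, ∑ n ∈ F j, c (k i) n := by
      intro j hj
      rw [Finset.sum_sub_distrib, Finset.sum_comm]
    rw [Finset.sum_congr rfl hexp, Finset.sum_sub_distrib,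
      sum_erase_comm (fun i j => ∑ n ∈ F j, c (k i) n)]
    have hlow2 : (K : ℝ) * (m - 2 * ε) ≤ ∑ j ∈ Finset.range K, ∑ n ∈ F j, c (k j) n := by
      have h9 := Finset.sum_le_sum (s := Finset.range K)
        (f := fun _ => m - 2 * ε) (g := fun j => ∑ n ∈ F j, c (k j) n)
        (fun j hj => h3 j (Finset.mem_range.mp hj))
      simp [Finset.sum_const, Finset.card_range, nsmul_eq_mul] at h9
      linarith
    have hcross : ∑ i ∈ Finset.range K, ∑ j ∈ (Finset.range K).erase i, ∑ n ∈ F j, c (k i) n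
        ≤ (K : ℝ) * (2 * ε) := by
      have h9 := Finset.sum_le_sum (s := Finset.range K)
        (f := fun i => ∑ j ∈ (Finset.range K).erase i, ∑ n ∈ F j, c (k i) n)
        (g := fun _ => 2 * ε) (fun i hi => h4 i (Finset.mem_range.mp hi))
      simpa [Finset.sum_const, Finset.card_range, nsmul_eq_mul] using h9
    have heq : (K : ℝ) * (m / 2) = (K : ℝ) * (m - 2 * ε) - (K : ℝ) * (2 * ε) := by
      rw [hεdef]; ring
    linarith
  have hyc : ∀ n, ‖(inner ℂ y (x n) : ℂ)‖ = ‖y'‖⁻¹ * ‖(inner ℂ y' (x n) : ℂ)‖ := by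
    intro n
    rw [hydef, inner_smul_left, norm_mul, Complex.conj_ofReal, Complex.norm_real,
      Real.norm_eq_abs, abs_of_nonneg (inv_nonneg.mpr (norm_nonneg y'))]
  have hNsum : Real.sqrt K * (m / 2) ≤ ∑ n ∈ N, ‖(inner ℂ y (x n) : ℂ)‖ := by
    have h8 : ∑ n ∈ N, ‖(inner ℂ y (x n) : ℂ)‖ = ‖y'‖⁻¹ * ∑ n ∈ N, ‖(inner ℂ y' (x n) : ℂ)‖ := by
      rw [Finset.mul_sum]; exact Finset.sum_congr rfl fun n _ => hyc n
    rw [h8, hny']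
    have hss : Real.sqrt K * Real.sqrt K = (K : ℝ) := Real.mul_self_sqrt hKpos.le
    have hsKpos : 0 < Real.sqrt K := Real.sqrt_pos.mpr hKpos
    have h9 : (Real.sqrt K)⁻¹ * ((K : ℝ) * (m / 2)) = Real.sqrt K * (m / 2) := by
      have h10 : (Real.sqrt K)⁻¹ * (K : ℝ) = Real.sqrt K := by
        rw [inv_mul_eq_iff_eq_mul₀ hsKpos.ne']
        exact hss.symm
      rw [← mul_assoc, h10]
    calc Real.sqrt K * (m / 2) = (Real.sqrt K)⁻¹ * ((K : ℝ) * (m / 2)) := h9.symm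
      _ ≤ (Real.sqrt K)⁻¹ * ∑ n ∈ N, ‖(inner ℂ y' (x n) : ℂ)‖ :=
          mul_le_mul_of_nonneg_left hmain (by positivity)
  have hcontr := (hrow y hyS hy1).2
  have hNle : ∑ n ∈ N, ‖(inner ℂ y (x n) : ℂ)‖ ≤ ∑' n, ‖(inner ℂ y (x n) : ℂ)‖ :=
    (hrow y hyS hy1).1.sum_le_tsum N (fun n _ => norm_nonneg _)
  linarith
end

section
/- The collection of ℓ¹-bounded subsets of H is closed under finite unions if and only if it is closed under finite (Minkowski) sums. -/
open scoped ENNReal NNReal Pointwise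

section Aux

set_option linter.unusedSectionVars false

variable {H : Type*} [NormedAddCommGroup H] [InnerProductSpace ℂ H] [CompleteSpace H]

lemma refl_map {x y : H} (hn : ‖x‖ = ‖y‖) (hr : (inner ℂ x y : ℂ) = inner ℂ y x) :
    Submodule.reflection (ℂ ∙ (x - y))ᗮ x = y := by
  set R : H ≃ₗᵢ[ℂ] H := Submodule.reflection (ℂ ∙ (x - y))ᗮ
  suffices R x + R x = y + y by
    apply smul_right_injective H (by norm_num : (2 : ℂ) ≠ 0)
    simpa [two_smul] using this
  have h₁ : R (x - y) = -(x - y) := Submodule.reflection_orthogonalComplement_singleton_eq_neg (x - y)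
  have h₂ : R (x + y) = x + y := by
    apply Submodule.reflection_mem_subspace_eq_self
    rw [Submodule.mem_orthogonal_singleton_iff_inner_left]
    rw [inner_sub_right, inner_add_left, inner_add_left]
    have hx : (inner ℂ x x : ℂ) = (‖x‖ : ℂ) ^ 2 := inner_self_eq_norm_sq_to_K x
    have hy : (inner ℂ y y : ℂ) = (‖y‖ : ℂ) ^ 2 := inner_self_eq_norm_sq_to_K y
    rw [hx, hy, hr, hn]
    ring
  convert congr_arg₂ (· + ·) h₂ h₁ using 1
  · simp
  · abel

/-- existence of a Riesz basis in which `v` has finite ℓ¹ norm -/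
lemma exists_riesz (b₀ : HilbertBasis ℕ ℂ H) (v : H) :
    ∃ e : ℕ → H, IsRieszBasis e ∧ l1Norm e v ≠ ⊤ := by
  rcases eq_or_ne v 0 with rfl | hv
  · refine ⟨b₀, ⟨b₀, ContinuousLinearEquiv.refl ℂ H, fun n => rfl⟩, ?_⟩
    simp [l1Norm, inner_zero_left]
  · set x : H := b₀ 0
    have hx1 : ‖x‖ = 1 := b₀.orthonormal.1 0
    set w : H := ‖v‖⁻¹ • v with hw
    have hw1 : ‖w‖ = 1 := by
      rw [hw, norm_smul, norm_inv, norm_norm, inv_mul_cancel₀ (norm_ne_zero_iff.2 hv)]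
    set d : ℂ := inner ℂ x w with hd
    set c : ℂ := if d = 0 then 1 else (starRingEnd ℂ) d / ‖d‖ with hc
    have hc1 : ‖c‖ = 1 := by
      rw [hc]
      split_ifs with h
      · simp
      · rw [norm_div, RCLike.norm_conj, Complex.norm_real, norm_norm,
          div_self (norm_ne_zero_iff.2 h)]
    have hc0 : c ≠ 0 := by intro h; rw [h] at hc1; simp at hc1
    set y : H := c • w with hy
    have hy1 : ‖y‖ = 1 := by rw [hy, norm_smul, hc1, one_mul, hw1]
    have hreal : (inner ℂ x y : ℂ) = inner ℂ y x := by
      rw [hy, inner_smul_right, inner_smul_left, ← inner_conj_symm w x]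
      rw [← hd, hc]
      split_ifs with h
      · simp [h]
      · rw [map_div₀]
        simp only [Complex.conj_conj, Complex.conj_ofReal]
        ring
    set U : H ≃ₗᵢ[ℂ] H := Submodule.reflection (ℂ ∙ (x - y))ᗮ with hU
    have hUx : U x = y := refl_map (by rw [hx1, hy1]) hreal
    refine ⟨fun n => U (b₀ n), ⟨b₀, U.toContinuousLinearEquiv, fun n => rfl⟩, ?_⟩
    set a : ℂ := (‖v‖ : ℂ) * c⁻¹ with ha
    have hnv : (‖v‖ : ℂ) ≠ 0 := by
      exact_mod_cast norm_ne_zero_iff.2 hv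
    have hva : v = a • y := by
      rw [hy, hw, smul_smul, show a * c = (‖v‖ : ℂ) by rw [ha]; field_simp,
        show ((‖v‖ : ℂ)) • (‖v‖⁻¹ • v) = ‖v‖ • (‖v‖⁻¹ • v) from
          (RCLike.real_smul_eq_coe_smul (K := ℂ) _ _).symm, smul_smul,
        mul_inv_cancel₀ (norm_ne_zero_iff.2 hv), one_smul]
    have key : ∀ n, (inner ℂ v (U (b₀ n)) : ℂ)
        = (starRingEnd ℂ) a * (if 0 = n then 1 else 0) := by
      intro n
      rw [hva, ← hUx, ← LinearIsometryEquiv.map_smul, LinearIsometryEquiv.inner_map_map,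
        inner_smul_left, orthonormal_iff_ite.mp b₀.orthonormal 0 n]
    rw [l1Norm]
    have : ∑' n, (‖(inner ℂ v (U (b₀ n)) : ℂ)‖₊ : ℝ≥0∞) = (‖a‖₊ : ℝ≥0∞) := by
      rw [tsum_eq_single 0 (fun m hm => by
        rw [key m, if_neg (fun h => hm h.symm)]
        simp)]
      rw [key 0, if_pos rfl, mul_one]
      simp
    rw [this]
    exact ENNReal.coe_ne_top

lemma l1Norm_add_le (e : ℕ → H) (x y : H) :
    l1Norm e (x + y) ≤ l1Norm e x + l1Norm e y := by
  rw [l1Norm, l1Norm, l1Norm, ← ENNReal.tsum_add]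
  refine ENNReal.tsum_le_tsum fun n => ?_
  rw [← ENNReal.coe_add]
  exact_mod_cast (by rw [inner_add_left]; exact nnnorm_add_le _ _ :
    ‖(inner ℂ (x + y) (e n) : ℂ)‖₊ ≤ ‖(inner ℂ x (e n) : ℂ)‖₊ + ‖(inner ℂ y (e n) : ℂ)‖₊)

lemma L1Bounded_mono {M N : Set H} (h : M ⊆ N) (hN : L1Bounded N) : L1Bounded M := by
  obtain ⟨e, he, R, hR, hb⟩ := hN
  exact ⟨e, he, R, hR, fun x hx => hb x (h hx)⟩

lemma L1Bounded_pair (b₀ : HilbertBasis ℕ ℂ H) (v : H) : L1Bounded ({0, v} : Set H) := by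
  obtain ⟨e, he, hfin⟩ := exists_riesz b₀ v
  refine ⟨e, he, l1Norm e v, hfin, fun x hx => ?_⟩
  rcases hx with rfl | rfl
  · simp [l1Norm, inner_zero_left]
  · exact le_rfl


end Aux

theorem stmt16 {H : Type*} [NormedAddCommGroup H] [InnerProductSpace ℂ H] [CompleteSpace H] (b₀ : HilbertBasis ℕ ℂ H) :
    (∀ M N : Set H, L1Bounded M → L1Bounded N → L1Bounded (M ∪ N)) ↔
    (∀ M N : Set H, L1Bounded M → L1Bounded N → L1Bounded (M + N)) := by 
  constructor
  · intro h M N hM hN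
    obtain ⟨e, he, R, hR, hb⟩ := h M N hM hN
    refine ⟨e, he, R + R, ENNReal.add_ne_top.2 ⟨hR, hR⟩, ?_⟩
    rintro z hz
    rw [Set.mem_add] at hz
    obtain ⟨x, hx, y, hy, rfl⟩ := hz
    exact (l1Norm_add_le e x y).trans (add_le_add (hb x (Or.inl hx)) (hb y (Or.inr hy)))
  · intro h M N hM hN
    rcases Set.eq_empty_or_nonempty M with rfl | ⟨x₀, hx₀⟩
    · simpa using hN
    rcases Set.eq_empty_or_nonempty N with rfl | ⟨y₀, hy₀⟩
    · simpa using hM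
    have h1 : L1Bounded ({-x₀} : Set H) :=
      L1Bounded_mono (Set.subset_insert 0 {-x₀}) (L1Bounded_pair b₀ (-x₀))
    have h2 : L1Bounded ({-y₀} : Set H) :=
      L1Bounded_mono (Set.subset_insert 0 {-y₀}) (L1Bounded_pair b₀ (-y₀))
    have h3 : L1Bounded ({x₀} : Set H) :=
      L1Bounded_mono (Set.subset_insert 0 {x₀}) (L1Bounded_pair b₀ x₀)
    have h4 : L1Bounded ({0, y₀ - x₀} : Set H) := L1Bounded_pair b₀ (y₀ - x₀)
    have hbig : L1Bounded (((M + {-x₀}) + (N + {-y₀})) + ({x₀} + ({0, y₀ - x₀} : Set H))) :=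
      h _ _ (h _ _ (h M _ hM h1) (h N _ hN h2)) (h _ _ h3 h4)
    refine L1Bounded_mono ?_ hbig
    rintro z (hz | hz)
    · have hzeq : ((z + -x₀) + (y₀ + -y₀)) + (x₀ + 0) = z := by abel
      rw [← hzeq]
      exact Set.add_mem_add
        (Set.add_mem_add (Set.add_mem_add hz rfl) (Set.add_mem_add hy₀ rfl))
        (Set.add_mem_add rfl (Or.inl rfl))
    · have hzeq : ((x₀ + -x₀) + (z + -y₀)) + (x₀ + (y₀ - x₀)) = z := by abel
      rw [← hzeq]
      exact Set.add_mem_add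
        (Set.add_mem_add (Set.add_mem_add hx₀ rfl) (Set.add_mem_add hz rfl))
        (Set.add_mem_add rfl (Or.inr rfl))
end
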